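/- arXiv:0803.3553 — 8 statements merged into one kernel-verified Lean document; each statement's English description precedes it below -/
import Mathlib

section
/- Let L = GF(2^n) and let p(x) = r_0 x + r_1 x^{2^k} + r_2 x^{2^{2k}} + ... + r_d x^{2^{kd}} be a nonzero polynomial with coefficients r_0, ..., r_d in L, where k is a positive integer with gcd(k, n) = 1. Then p has at most 2^d roots in L. -/
/-!
Write `σ x = x ^ 2 ^ k`, so that `p = ∑ rᵢ σⁱ`, and let `F` be the fixed field of `σ`.
If `r_d ≠ 0` and `a ≠ 0` is a root of `p`, then `p (a y) = g (σ y - y)` for a `σ`-polynomial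
`g` of degree `d - 1` with leading coefficient `r_d σ^d(a) ≠ 0`: this is division by `σ - 1`,
using `σⁱ - 1 = (∑_{j<i} σʲ) (σ - 1)`, and the remainder `p (a) y` vanishes. The additive map
`y ↦ σ y - y` has kernel `F`, so it is at most `|F|`-to-one, and induction on `d` bounds the
number of roots by `|F| ^ d`. Since `gcd(k, n) = 1`, `F = GF(2)`.
-/

open Finset Function

section Preimage

variable {G H : Type*} [AddGroup G] [AddGroup H] [Finite G]

theorem AddMonoidHom.ncard_preimage_singleton_le (f : G →+ H) (y : H) :
    (f ⁻¹' {y}).ncard ≤ (f ⁻¹' {0}).ncard := by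
  obtain h | ⟨x₀, hx₀⟩ := (f ⁻¹' {y}).eq_empty_or_nonempty
  · simp [h]
  refine Set.ncard_le_ncard_of_injOn (· - x₀) (fun x hx => ?_) sub_left_injective.injOn
  simp_all

theorem AddMonoidHom.ncard_preimage_le (f : G →+ H) {T : Set H} (hT : T.Finite) :
    (f ⁻¹' T).ncard ≤ (f ⁻¹' {0}).ncard * T.ncard := by
  calc (f ⁻¹' T).ncard = (⋃ y ∈ hT.toFinset, f ⁻¹' {y}).ncard := by
        simp [Set.biUnion_preimage_singleton]
    _ ≤ ∑ y ∈ hT.toFinset, (f ⁻¹' {y}).ncard := set_ncard_biUnion_le _ _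
    _ ≤ ∑ _y ∈ hT.toFinset, (f ⁻¹' {0}).ncard :=
        sum_le_sum fun y _ => f.ncard_preimage_singleton_le y
    _ = (f ⁻¹' {0}).ncard * T.ncard := by
        rw [sum_const, smul_eq_mul, Set.ncard_eq_toFinset_card T hT, mul_comm]

end Preimage

section Linearized

variable {K : Type*} [Field K] (σ : K →+* K)

theorem sum_mul_pow_apply_eq_sum_mul_pow_apply_sub (r : ℕ → K) (d : ℕ) (y : K) :
    ∑ i ∈ range (d + 1), r i * (σ ^ i) y =
      ∑ j ∈ range d, (∑ i ∈ Ioc j d, r i) * (σ ^ j) (σ y - y) +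
        (∑ i ∈ range (d + 1), r i) * y := by
  have htelescope (i : ℕ) : ∑ j ∈ range i, (σ ^ j) (σ y - y) = (σ ^ i) y - y := by
    have hshift (j : ℕ) : (σ ^ j) (σ y) = (σ ^ (j + 1)) y := by
      rw [pow_succ, RingHom.coe_mul, comp_apply]
    simp_rw [map_sub, hshift]
    simpa using sum_range_sub (fun j => (σ ^ j) y) i
  calc ∑ i ∈ range (d + 1), r i * (σ ^ i) y
      = ∑ i ∈ range (d + 1), ∑ j ∈ range i, r i * (σ ^ j) (σ y - y) +
          ∑ i ∈ range (d + 1), r i * y := by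
        simp_rw [← mul_sum, htelescope, ← sum_add_distrib, mul_sub, sub_add_cancel]
    _ = _ := by
        rw [sum_comm' (t' := range d) (s' := fun j => Ioc j d), sum_mul]
        · simp_rw [sum_mul]
        · intro i j
          simp only [mem_range, mem_Ioc]
          omega

variable [Finite K]

theorem ncard_setOf_sum_mul_pow_apply_eq_zero_le_mul_of_root (d : ℕ) (r : ℕ → K) {a : K}
    (ha : a ≠ 0) (hroot : ∑ i ∈ range (d + 1), r i * (σ ^ i) a = 0) :
    {x | ∑ i ∈ range (d + 1), r i * (σ ^ i) x = 0}.ncard ≤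
      (fixedPoints σ).ncard *
        {z | ∑ j ∈ range d, (∑ i ∈ Ioc j d, r i * (σ ^ i) a) * (σ ^ j) z = 0}.ncard := by
  set T := {z | ∑ j ∈ range d, (∑ i ∈ Ioc j d, r i * (σ ^ i) a) * (σ ^ j) z = 0}
  let Δ : K →+ K := σ.toAddMonoidHom - AddMonoidHom.id K
  have hker : Δ ⁻¹' {0} = fixedPoints σ := by
    ext x
    simp [Δ, sub_eq_zero, IsFixedPt]
  -- substituting `x = a * y` turns the root `a` into the root `1` of the kernel of `Δ = σ - 1`
  have hpreimage :
      (a * ·) ⁻¹' {x | ∑ i ∈ range (d + 1), r i * (σ ^ i) x = 0} = Δ ⁻¹' T := by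
    ext y
    have := sum_mul_pow_apply_eq_sum_mul_pow_apply_sub σ (fun i => r i * (σ ^ i) a) d y
    simp only [mul_assoc, ← map_mul] at this
    show _ = 0 ↔ _ = 0
    rw [this, hroot, zero_mul, add_zero]
    rfl
  calc _ = ((a * ·) ⁻¹' {x | ∑ i ∈ range (d + 1), r i * (σ ^ i) x = 0}).ncard :=
        (Set.ncard_preimage_of_injective_subset_range (mul_right_injective₀ ha)
          (by simp [(mul_left_surjective₀ ha).range_eq])).symm
    _ ≤ _ := by
        rw [hpreimage, ← hker]
        exact Δ.ncard_preimage_le T.toFinite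

theorem ncard_setOf_sum_mul_pow_apply_eq_zero_le (d : ℕ) (r : ℕ → K)
    (hr : ∃ i ≤ d, r i ≠ 0) :
    {x | ∑ i ∈ range (d + 1), r i * (σ ^ i) x = 0}.ncard ≤ (fixedPoints σ).ncard ^ d := by
  induction d generalizing r with
  | zero =>
    obtain ⟨i, hi, hri⟩ := hr
    obtain rfl : i = 0 := by omega
    simp [hri]
  | succ d ih =>
    have hq : 1 ≤ (fixedPoints σ).ncard := (Set.ncard_pos).mpr ⟨0, map_zero σ⟩
    by_cases hlast : r (d + 1) = 0
    · have hr' : ∃ i ≤ d, r i ≠ 0 := by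
        obtain ⟨i, hi, hri⟩ := hr
        exact ⟨i, by grind, hri⟩
      simp only [sum_range_succ _ (d + 1), hlast, zero_mul, add_zero]
      exact (ih r hr').trans (Nat.pow_le_pow_right hq d.le_succ)
    by_cases hroot : ∃ a ≠ 0, ∑ i ∈ range (d + 2), r i * (σ ^ i) a = 0
    · obtain ⟨a, ha, hroot⟩ := hroot
      have hlead : ∑ i ∈ Ioc d (d + 1), r i * (σ ^ i) a ≠ 0 := by
        simpa using mul_ne_zero hlast ((map_ne_zero (σ ^ (d + 1))).mpr ha)
      calc _ ≤ _ :=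
          ncard_setOf_sum_mul_pow_apply_eq_zero_le_mul_of_root σ (d + 1) r ha hroot
        _ ≤ (fixedPoints σ).ncard * (fixedPoints σ).ncard ^ d :=
          Nat.mul_le_mul_left _ (ih _ ⟨d, le_rfl, hlead⟩)
        _ = _ := (pow_succ' _ _).symm
    · push Not at hroot
      calc _ ≤ ({0} : Set K).ncard :=
          Set.ncard_le_ncard fun x hx => by_contra fun h => hroot x h hx
        _ ≤ _ := by simpa using Nat.one_le_pow _ _ hq

end Linearized

theorem pow_pow_gcd_eq_self {M₀ : Type*} [MonoidWithZero M₀] [IsRightCancelMulZero M₀]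
    {p a b : ℕ} (hp : p ≠ 0) {x : M₀} (ha : x ^ p ^ a = x) (hb : x ^ p ^ b = x) :
    x ^ p ^ Nat.gcd a b = x := by
  rcases eq_or_ne x 0 with rfl | hx
  · exact zero_pow (pow_ne_zero _ hp)
  have hsub (m : ℕ) : x ^ p ^ m = x ↔ x ^ (p ^ m - 1) = 1 := by
    conv_lhs => rw [← Nat.sub_add_cancel (Nat.one_le_iff_ne_zero.mpr (pow_ne_zero m hp)),
      pow_succ, mul_eq_right₀ hx]
  rw [hsub] at ha hb ⊢
  rw [← Nat.pow_sub_one_gcd_pow_sub_one]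
  exact pow_gcd_eq_one.mpr ⟨ha, hb⟩

theorem iterateFrobenius_pow {R : Type*} [CommSemiring R] (p : ℕ) [ExpChar R p] (k i : ℕ) :
    iterateFrobenius R p k ^ i = iterateFrobenius R p (k * i) := by
  rw [iterateFrobenius_eq_pow, iterateFrobenius_eq_pow, pow_mul]

theorem GaloisField.fixedPoints_iterateFrobenius_two {n k : ℕ} (hn : n ≠ 0)
    (hkn : Nat.gcd k n = 1) :
    fixedPoints (iterateFrobenius (GaloisField 2 n) 2 k) = {0, 1} := by
  have : Fintype (GaloisField 2 n) := Fintype.ofFinite _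
  ext x
  simp only [mem_fixedPoints_iff, iterateFrobenius_def, Set.mem_insert_iff, Set.mem_singleton_iff]
  refine ⟨fun hx => ?_, ?_⟩
  · have hcard : x ^ 2 ^ n = x := by
      simpa [← Nat.card_eq_fintype_card, GaloisField.card 2 n hn] using FiniteField.pow_card x
    have hidem := pow_pow_gcd_eq_self two_ne_zero hx hcard
    rw [hkn, pow_one, sq] at hidem
    exact IsIdempotentElem.iff_eq_zero_or_one.mp hidem
  · rintro (rfl | rfl) <;> simp

theorem stmt_0_general (n k d : ℕ) (hn : 0 < n) (hkn : Nat.gcd k n = 1)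
    (r : Fin (d + 1) → GaloisField 2 n) (hr : ∃ i, r i ≠ 0) :
    {x : GaloisField 2 n |
        ∑ i : Fin (d + 1), r i * x ^ 2 ^ (k * (i : ℕ)) = 0}.ncard ≤ 2 ^ d := by
  set σ := iterateFrobenius (GaloisField 2 n) 2 k
  let r' : ℕ → GaloisField 2 n := fun i => if h : i < d + 1 then r ⟨i, h⟩ else 0
  have hsum (x : GaloisField 2 n) : ∑ i : Fin (d + 1), r i * x ^ 2 ^ (k * (i : ℕ)) =
      ∑ i ∈ range (d + 1), r' i * (σ ^ i) x := by
    rw [sum_fin_eq_sum_range]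
    refine sum_congr rfl fun i _ => ?_
    simp [r', σ, iterateFrobenius_pow, iterateFrobenius_def]
  have hr' : ∃ i ≤ d, r' i ≠ 0 := by
    obtain ⟨i, hi⟩ := hr
    have hle : (i : ℕ) ≤ d := Nat.lt_succ_iff.mp i.isLt
    exact ⟨i, hle, by simpa [r', hle] using hi⟩
  simp_rw [hsum]
  simpa [σ, GaloisField.fixedPoints_iterateFrobenius_two hn.ne' hkn, Set.ncard_pair] using
    ncard_setOf_sum_mul_pow_apply_eq_zero_le σ d r' hr'

/-- A nonzero linearized polynomial `p(x) = ∑ r_i x^{2^{ki}}` of symbolic degree `d`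
over `GF(2^n)`, with `gcd(k,n) = 1`, has at most `2^d` roots. -/
theorem stmt_0 (n k d : ℕ) (hn : 0 < n) (hk : 0 < k) (hkn : Nat.gcd k n = 1)
    (r : Fin (d + 1) → GaloisField 2 n) (hr : ∃ i, r i ≠ 0) :
    {x : GaloisField 2 n |
        ∑ i : Fin (d + 1), r i * x ^ 2 ^ (k * (i : ℕ)) = 0}.ncard ≤ 2 ^ d :=
  stmt_0_general n k d hn hkn r hr
end

section
/- Let n be odd, let k be a positive integer with gcd(k, n) = 1, and let a, b, c be elements of L = GF(2^n), not all zero. Then the exponential sum S = \sum_{x \in L} (-1)^{Tr(a x + b x^{2^k+1} + c x^{2^{2k}+1})} (an integer) takes one of the five values 0, 2^{(n+1)/2}, -2^{(n+1)/2}, 2^{(n+3)/2}, -2^{(n+3)/2}. -/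
noncomputable instance {n : ℕ} : Fintype (GaloisField 2 n) := Fintype.ofFinite _

/-!
Let `σ x = x ^ 2 ^ k`, `Q x = a x + b x σ(x) + c x σ²(x)` and `ψ = (-1) ^ Tr`, so that the sum is
`S = ∑ ψ (Q x)`. Since `Tr ∘ σ = Tr`, the polar form of `Q` satisfies
`ψ (Q (x + z) - Q x - Q z) = ψ (σ²x · M z)` for the σ-linearized polynomial
`M z = c z + σb σz + σ²b σ³z + σ²c σ⁴z`; squaring `S` therefore gives
`S² = 2ⁿ ∑_{z ∈ ker M} ψ (Q z)`. On `ker M` the map `ψ ∘ Q` is a character, so `S² = 0` or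
`S² = 2ⁿ |ker M|`. As `gcd(k, n) = 1`, the fixed field of `σ` is `GF(2)`, and a σ-linearized
polynomial of σ-degree `d` then has at most `2 ^ d` roots. Hence `|ker M| = 2 ^ w` with `w ≤ 4`,
and since `S²` is a square and `n` is odd, `w ∈ {1, 3}`.
-/

open Finset

theorem AddMonoidHom.card_filter_le_card_ker_mul {G H : Type*} [AddGroup G] [AddGroup H]
    [Fintype G] [Fintype H] [DecidableEq H] (g : G →+ H) (p : H → Prop) [DecidablePred p] :
    #{z | p (g z)} ≤ #{z | g z = 0} * #{w | p w} := by
  refine card_le_mul_card_image_of_maps_to (f := g) (by simp) _ fun w _ ↦ ?_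
  obtain ⟨z₀, hz₀⟩ | hempty := (filter (fun z ↦ g z = w) {z | p (g z)}).eq_empty_or_nonempty.symm
  · refine card_le_card_of_injOn (fun z ↦ -z₀ + z) (fun z hz ↦ ?_)
      (fun z _ z' _ h ↦ by simpa using h)
    simp only [coe_filter, mem_filter, mem_univ, true_and, Set.mem_ofPred_eq] at hz hz₀ ⊢
    rw [map_add, map_neg, hz.2, hz₀.2, neg_add_cancel]
  · simp [hempty]

theorem RingHom.pow_apply_sub_self_eq_sum {R : Type*} [Ring R] (σ : R →+* R) (i : ℕ) (z : R) :
    (σ ^ i) z - z = ∑ j ∈ Finset.range i, (σ ^ j) (σ z - z) := by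
  simp only [map_sub, ← RingHom.comp_apply, ← RingHom.mul_def, ← pow_succ]
  exact (sum_range_sub (fun j ↦ (σ ^ j) z) i).symm

section SigmaPoly

variable {F : Type*} [Field F]

@[simps]
def sigmaPoly (σ : F →+* F) (d : ℕ) (a : ℕ → F) : F →+ F where
  toFun z := ∑ i ∈ range (d + 1), a i * (σ ^ i) z
  map_zero' := by simp
  map_add' x y := by simp [mul_add, sum_add_distrib]

theorem sigmaPoly_mul_left (σ : F →+* F) (d : ℕ) (a : ℕ → F) (v z : F) :
    sigmaPoly σ d a (v * z) = sigmaPoly σ d (fun i ↦ a i * (σ ^ i) v) z := by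
  simp only [sigmaPoly_apply, map_mul, mul_assoc]

theorem sigmaPoly_succ_eq_comp (σ : F →+* F) (d : ℕ) (b : ℕ → F)
    (hb : ∑ i ∈ range (d + 2), b i = 0) (z : F) :
    sigmaPoly σ (d + 1) b z =
      sigmaPoly σ d (fun j ↦ ∑ i ∈ Ioc j (d + 1), b i) (σ z - z) := by
  have h : sigmaPoly σ (d + 1) b z = ∑ i ∈ range (d + 2), b i * ((σ ^ i) z - z) := by
    simp [mul_sub, sum_sub_distrib, ← sum_mul, hb]
  simp only [h, RingHom.pow_apply_sub_self_eq_sum, mul_sum, sigmaPoly_apply, sum_mul]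
  refine sum_comm' fun i j ↦ ?_
  simp only [mem_range, mem_Ioc]
  omega

variable [Fintype F] [DecidableEq F]

/-- A nonzero root `v` turns `z ↦ sigmaPoly σ d a (v z)` into a σ-polynomial vanishing at `1`;
such a polynomial factors through `z ↦ σ z - z`, whose fibres are cosets of the fixed points of `σ`.
-/
theorem card_sigmaPoly_zeros_le (σ : F →+* F) (d : ℕ) (a : ℕ → F) (ha : a d ≠ 0) :
    #{z | sigmaPoly σ d a z = 0} ≤ #{z | σ z = z} ^ d := by
  have one_le : 1 ≤ #{z | σ z = z} := card_pos.mpr ⟨0, by simp⟩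
  induction d generalizing a with
  | zero =>
    refine card_le_one.mpr fun z hz w hw ↦ ?_
    simp_all
  | succ d ih =>
    by_cases hroot : ∃ v ≠ 0, sigmaPoly σ (d + 1) a v = 0
    · obtain ⟨v, hv, hav⟩ := hroot
      set b : ℕ → F := fun i ↦ a i * (σ ^ i) v
      set c : ℕ → F := fun j ↦ ∑ i ∈ Ioc j (d + 1), b i
      set g : F →+ F := σ.toAddMonoidHom - AddMonoidHom.id F
      have hb : ∑ i ∈ range (d + 2), b i = 0 := by
        have := sigmaPoly_mul_left σ (d + 1) a v 1
        rwa [mul_one, hav, sigmaPoly_apply, eq_comm] at this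
      have hc : c d ≠ 0 := by
        simp only [c, b, Nat.Ioc_succ_singleton, sum_singleton]
        exact mul_ne_zero ha ((map_ne_zero _).mpr hv)
      calc #{z | sigmaPoly σ (d + 1) a z = 0} = #{z | sigmaPoly σ d c (g z) = 0} := by
            refine (card_equiv (Equiv.mulLeft₀ v hv) fun z ↦ ?_).symm
            simp only [mem_filter, mem_univ, true_and, Equiv.mulLeft₀_apply, sigmaPoly_mul_left]
            exact Eq.congr_left (sigmaPoly_succ_eq_comp σ d b hb z).symm
        _ ≤ #{z | g z = 0} * #{w | sigmaPoly σ d c w = 0} :=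
            g.card_filter_le_card_ker_mul (fun w ↦ sigmaPoly σ d c w = 0)
        _ = #{z | σ z = z} * #{w | sigmaPoly σ d c w = 0} := by
            congr 3
            ext z
            exact sub_eq_zero
        _ ≤ #{z | σ z = z} * #{z | σ z = z} ^ d := Nat.mul_le_mul_left _ (ih c hc)
        _ = #{z | σ z = z} ^ (d + 1) := (pow_succ' _ _).symm
    · have hzero : ∀ z, sigmaPoly σ (d + 1) a z = 0 → z = 0 := fun z hz ↦
        by_contra fun h ↦ hroot ⟨z, h, hz⟩
      calc #{z | sigmaPoly σ (d + 1) a z = 0} ≤ 1 := card_le_one.mpr fun z hz w hw ↦ by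
            rw [hzero z (mem_filter.1 hz).2, hzero w (mem_filter.1 hw).2]
        _ ≤ _ := Nat.one_le_pow _ _ one_le

theorem card_sigmaPoly_zeros_le_of_ne_zero (σ : F →+* F) (a : ℕ → F) {d i : ℕ} (hi : i ≤ d)
    (ha : a i ≠ 0) : #{z | sigmaPoly σ d a z = 0} ≤ #{z | σ z = z} ^ d := by
  induction d with
  | zero => exact card_sigmaPoly_zeros_le σ 0 a (by rwa [Nat.le_zero.1 hi] at ha)
  | succ d ih =>
    by_cases had : a (d + 1) = 0
    · have hi' : i ≤ d := Nat.le_of_lt_succ (lt_of_le_of_ne hi (by rintro rfl; exact ha had))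
      have hpoly : sigmaPoly σ (d + 1) a = sigmaPoly σ d a := by
        ext z
        simp [sum_range_succ (n := d + 1), had]
      rw [hpoly]
      exact (ih hi').trans (Nat.pow_le_pow_right (card_pos.mpr ⟨0, by simp⟩) d.le_succ)
    · exact card_sigmaPoly_zeros_le σ (d + 1) a had

end SigmaPoly

theorem card_fixed_iterateFrobenius_le {F : Type*} [Field F] [Fintype F] [DecidableEq F]
    {p : ℕ} [Fact p.Prime] [CharP F p] {n k : ℕ} (hcard : Fintype.card F = p ^ n)
    (hkn : k.gcd n = 1) : #{z | iterateFrobenius F p k z = z} ≤ p := by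
  have hfix : ∀ z, iterateFrobenius F p k z = z → z ^ p = z := by
    intro z hz
    have hk : Function.IsPeriodicPt (frobenius F p) k z := by
      rwa [Function.IsPeriodicPt, Function.IsFixedPt, ← coe_iterateFrobenius]
    have hn : Function.IsPeriodicPt (frobenius F p) n z := by
      rw [Function.IsPeriodicPt, Function.IsFixedPt, ← coe_iterateFrobenius, iterateFrobenius_def,
        ← hcard, FiniteField.pow_card]
    simpa [hkn, Function.IsPeriodicPt, Function.IsFixedPt, frobenius_def] using hk.gcd hn
  calc #{z | iterateFrobenius F p k z = z}
      ≤ (Polynomial.X ^ p - Polynomial.X : Polynomial F).natDegree := by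
        refine Polynomial.card_le_degree_of_subset_roots fun z hz ↦ ?_
        rw [Polynomial.mem_roots
          (FiniteField.X_pow_card_sub_X_ne_zero F (Fact.out : p.Prime).one_lt)]
        simp [hfix z (mem_filter.1 hz).2]
    _ = p := FiniteField.X_pow_card_sub_X_natDegree_eq F (Fact.out : p.Prime).one_lt

def signChar : AddChar (ZMod 2) ℤ where
  toFun t := if t = 0 then 1 else -1
  map_zero_eq_one' := rfl
  map_add_eq_mul' := by decide

section TraceChar

variable (F : Type*) [Field F] [Algebra (ZMod 2) F]

noncomputable def traceChar : AddChar F ℤ :=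
  signChar.compAddMonoidHom (Algebra.trace (ZMod 2) F).toAddMonoidHom

theorem traceChar_apply (x : F) :
    traceChar F x = if Algebra.trace (ZMod 2) F x = 0 then 1 else -1 := rfl

theorem traceChar_isPrimitive [Finite F] : (traceChar F).IsPrimitive := by
  refine AddChar.IsPrimitive.of_ne_one (AddChar.ne_one_iff.2 ?_)
  obtain ⟨x, hx⟩ := Algebra.trace_surjective (ZMod 2) F 1
  exact ⟨x, by simp [traceChar_apply, hx]⟩

variable {F}

theorem traceChar_iterateFrobenius [Finite F] [CharP F 2] (k : ℕ) (x : F) :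
    traceChar F (iterateFrobenius F 2 k x) = traceChar F x := by
  have h := Algebra.trace_eq_of_algEquiv
    (FiniteField.frobeniusAlgEquivOfAlgebraic (ZMod 2) F ^ k) x
  rw [AlgEquiv.coe_pow, FiniteField.coe_frobeniusAlgEquivOfAlgebraic_iterate, ZMod.card] at h
  rw [traceChar_apply, traceChar_apply, iterateFrobenius_def, h]

end TraceChar

section Quadratic

variable {R : Type*} [CommRing R] [Fintype R] [DecidableEq R] {ψ : AddChar R ℤ}
  {Q : R → R} {τ : R ≃ R} {L : R →+ R}

theorem sq_sum_eq_card_mul_sum_ker (hψ : ψ.IsPrimitive)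
    (hQ : ∀ x z, ψ (Q (x + z)) = ψ (Q x) * ψ (Q z) * ψ (τ x * L z)) :
    (∑ x, ψ (Q x)) ^ 2 = Fintype.card R * ∑ z ∈ {z | L z = 0}, ψ (Q z) := by
  calc (∑ x, ψ (Q x)) ^ 2 = ∑ x, ∑ z, ψ (Q x) * ψ (Q (x + z)) := by
        rw [sq, sum_mul_sum]
        exact sum_congr rfl fun x _ ↦ (Fintype.sum_equiv (Equiv.addLeft x) _ _ fun _ ↦ rfl).symm
    _ = ∑ z, ψ (Q z) * ∑ x, ψ (x * L z) := by
        rw [sum_comm]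
        refine sum_congr rfl fun z _ ↦ ?_
        rw [mul_sum, ← Equiv.sum_comp τ (fun y ↦ ψ (Q z) * ψ (y * L z))]
        refine sum_congr rfl fun x _ ↦ ?_
        rw [hQ, ← mul_assoc, ← mul_assoc, Int.isUnit_mul_self (ψ.val_isUnit _), one_mul]
    _ = Fintype.card R * ∑ z ∈ {z | L z = 0}, ψ (Q z) := by
        rw [mul_sum, sum_filter]
        refine sum_congr rfl fun z _ ↦ ?_
        rw [AddChar.sum_mulShift _ hψ]
        split_ifs <;> simp [mul_comm]

theorem sq_sum_eq_zero_or_eq_card_mul_card_ker (hψ : ψ.IsPrimitive)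
    (hQ : ∀ x z, ψ (Q (x + z)) = ψ (Q x) * ψ (Q z) * ψ (τ x * L z)) :
    (∑ x, ψ (Q x)) ^ 2 = 0 ∨ (∑ x, ψ (Q x)) ^ 2 = Fintype.card R * Nat.card L.ker := by
  let ψV : AddChar L.ker ℤ :=
    { toFun z := ψ (Q z)
      map_zero_eq_one' := by
        have h := hQ 0 0
        simp only [add_zero, map_zero, mul_zero, AddChar.map_zero_eq_one, mul_one] at h
        rwa [Int.isUnit_mul_self (ψ.val_isUnit _)] at h
      map_add_eq_mul' z w := by simp [hQ, L.mem_ker.1 w.2] }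
  have hsum : ∑ z ∈ {z | L z = 0}, ψ (Q z) = ∑ z : L.ker, ψV z :=
    sum_subtype _ (by simp) _
  rw [sq_sum_eq_card_mul_sum_ker hψ hQ, hsum, AddChar.sum_eq_ite]
  split_ifs <;> simp [Nat.card_eq_fintype_card]

end Quadratic

section SigmaQuad

variable {F : Type*} [Field F] (σ : F →+* F)

def sigmaQuad (a b c x : F) : F := a * x + b * (x * σ x) + c * (x * σ (σ x))

/-- The coefficients of the σ-linearized polynomial `M` with
`Tr (Q (x + z) - Q x - Q z) = Tr (σ² x · M z)` for `Q = sigmaQuad σ a b c` when `Tr ∘ σ = Tr`. -/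
def polarCoeff (b c : F) : ℕ → F
  | 0 => c
  | 1 => σ b
  | 3 => σ (σ b)
  | 4 => σ (σ c)
  | _ => 0

theorem exists_polarCoeff_ne_zero {b c : F} (hbc : ¬(b = 0 ∧ c = 0)) :
    ∃ i ≤ 4, polarCoeff σ b c i ≠ 0 := by
  by_cases hc : c = 0
  · exact ⟨3, by norm_num, by simpa [polarCoeff] using fun hb ↦ hbc ⟨hb, hc⟩⟩
  · exact ⟨4, le_rfl, by simpa [polarCoeff] using hc⟩

theorem AddChar.map_sigmaQuad_add {M : Type*} [CommMonoid M] (ψ : AddChar F M)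
    (hψ : ∀ y, ψ (σ y) = ψ y) (a b c x z : F) :
    ψ (sigmaQuad σ a b c (x + z)) = ψ (sigmaQuad σ a b c x) * ψ (sigmaQuad σ a b c z) *
      ψ (σ (σ x) * sigmaPoly σ 4 (polarCoeff σ b c) z) := by
  have hexpand : sigmaQuad σ a b c (x + z) = sigmaQuad σ a b c x + sigmaQuad σ a b c z +
      (b * (x * σ z) + b * (z * σ x) + c * (x * σ (σ z)) + c * (z * σ (σ x))) := by
    simp only [sigmaQuad, map_add]
    ring
  have hpolar : σ (σ x) * sigmaPoly σ 4 (polarCoeff σ b c) z =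
      σ (σ (b * (x * σ z))) + σ (b * (z * σ x)) + σ (σ (c * (x * σ (σ z)))) +
        c * (z * σ (σ x)) := by
    simp [sum_range_succ, polarCoeff]
    ring
  rw [hexpand, hpolar]
  simp only [AddChar.map_add_eq_mul, hψ]

end SigmaQuad

theorem card_ker_sigmaPoly_polarCoeff_le {F : Type*} [Field F] [Fintype F] [CharP F 2] {n k : ℕ}
    (hcard : Fintype.card F = 2 ^ n) (hkn : k.gcd n = 1) {b c : F} (hbc : ¬(b = 0 ∧ c = 0)) :
    Nat.card (sigmaPoly (iterateFrobenius F 2 k) 4 (polarCoeff (iterateFrobenius F 2 k) b c)).ker ≤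
      2 ^ 4 := by
  classical
  set σ := iterateFrobenius F 2 k
  obtain ⟨i, hi, hci⟩ := exists_polarCoeff_ne_zero σ hbc
  calc Nat.card (sigmaPoly σ 4 (polarCoeff σ b c)).ker
      = #{z | sigmaPoly σ 4 (polarCoeff σ b c) z = 0} := by
        rw [Nat.card_eq_fintype_card, Fintype.card_subtype]
        simp
    _ ≤ #{z | σ z = z} ^ 4 := card_sigmaPoly_zeros_le_of_ne_zero σ _ hi hci
    _ ≤ 2 ^ 4 := Nat.pow_le_pow_left (card_fixed_iterateFrobenius_le hcard hkn) 4

theorem Int.exists_eq_two_pow_of_sq_eq_two_pow {S : ℤ} {m : ℕ} (h : S ^ 2 = 2 ^ m) :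
    ∃ j, m = 2 * j ∧ (S = 2 ^ j ∨ S = -2 ^ j) := by
  have habs : S.natAbs ^ 2 = 2 ^ m := by
    rw [← Int.natAbs_pow, h]; rfl
  obtain ⟨j, -, hj⟩ := (Nat.dvd_prime_pow Nat.prime_two).1 (habs ▸ dvd_pow_self _ two_ne_zero)
  refine ⟨j, Nat.pow_right_injective le_rfl (?_ : 2 ^ m = 2 ^ (2 * j)), ?_⟩
  · rw [← habs, hj, ← pow_mul, mul_comm]
  · rcases Int.natAbs_eq S with hS | hS <;> rw [hS, hj] <;> simp

theorem mem_of_sq_eq_two_pow_mul_two_pow {S : ℤ} {n w : ℕ} (hn : Odd n) (hw : w ≤ 4)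
    (h : S ^ 2 = 2 ^ n * 2 ^ w) :
    S ∈ ({2 ^ ((n + 1) / 2), -2 ^ ((n + 1) / 2), 2 ^ ((n + 3) / 2), -2 ^ ((n + 3) / 2)} :
      Set ℤ) := by
  rw [← pow_add] at h
  obtain ⟨j, hj, hS⟩ := Int.exists_eq_two_pow_of_sq_eq_two_pow h
  obtain ⟨m, rfl⟩ := hn
  have hw : w = 1 ∨ w = 3 := by omega
  rcases hw with rfl | rfl
  · rw [show (2 * m + 1 + 1) / 2 = j by omega]
    rcases hS with rfl | rfl <;> simp
  · rw [show (2 * m + 1 + 3) / 2 = j by omega]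
    rcases hS with rfl | rfl <;> simp

theorem stmt_1_general (n k : ℕ) (hn : Odd n) (hkn : Nat.gcd k n = 1)
    (a b c : GaloisField 2 n) (habc : ¬(a = 0 ∧ b = 0 ∧ c = 0)) :
    (∑ x : GaloisField 2 n,
        if Algebra.trace (ZMod 2) (GaloisField 2 n)
            (a * x + b * x ^ (2 ^ k + 1) + c * x ^ (2 ^ (2 * k) + 1)) = 0
        then (1 : ℤ) else -1) ∈
      ({0, 2 ^ ((n + 1) / 2), -2 ^ ((n + 1) / 2),
        2 ^ ((n + 3) / 2), -2 ^ ((n + 3) / 2)} : Set ℤ) := by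
  classical
  set σ := iterateFrobenius (GaloisField 2 n) 2 k
  have hQ (x : GaloisField 2 n) :
      a * x + b * x ^ (2 ^ k + 1) + c * x ^ (2 ^ (2 * k) + 1) = sigmaQuad σ a b c x := by
    rw [sigmaQuad, ← iterateFrobenius_add_apply, iterateFrobenius_def, iterateFrobenius_def,
      pow_succ', pow_succ', two_mul]
  simp only [hQ, ← traceChar_apply]
  by_cases hbc : b = 0 ∧ c = 0
  · have ha : a ≠ 0 := fun ha ↦ habc ⟨ha, hbc⟩
    have h0 := AddChar.sum_mulShift a (traceChar_isPrimitive (GaloisField 2 n))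
    simp only [if_neg ha] at h0
    simp [sigmaQuad, hbc.1, hbc.2, mul_comm a, h0]
  have hcard : Fintype.card (GaloisField 2 n) = 2 ^ n := by
    rw [Fintype.card_eq_nat_card, GaloisField.card 2 n hn.pos.ne']
  rcases sq_sum_eq_zero_or_eq_card_mul_card_ker
    (τ := Equiv.ofBijective _ (σ.comp σ).injective.bijective_of_finite)
    (traceChar_isPrimitive _) (AddChar.map_sigmaQuad_add σ _ (traceChar_iterateFrobenius k) a b c)
    with h0 | hsq
  · simp [pow_eq_zero_iff two_ne_zero |>.1 h0]
  obtain ⟨w, -, hw⟩ := (Nat.dvd_prime_pow Nat.prime_two).1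
    (hcard ▸ Nat.card_eq_fintype_card (α := GaloisField 2 n) ▸ AddSubgroup.card_addSubgroup_dvd_card
      (sigmaPoly σ 4 (polarCoeff σ b c)).ker)
  refine Set.mem_insert_of_mem _ (mem_of_sq_eq_two_pow_mul_two_pow (w := w) hn ?_ ?_)
  · exact (Nat.pow_le_pow_iff_right one_lt_two).1
      (hw ▸ card_ker_sigmaPoly_polarCoeff_le hcard hkn hbc)
  · rw [hsq, hcard, hw]
    push_cast
    ring

/-- For odd `n`, `gcd(k,n)=1` and `(a,b,c) ≠ (0,0,0)`, the exponential sum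
`∑_x (-1)^{Tr(ax + bx^{2^k+1} + cx^{2^{2k}+1})}` takes one of five values. -/
theorem stmt_1 (n k : ℕ) (hn : Odd n) (hk : 0 < k) (hkn : Nat.gcd k n = 1)
    (a b c : GaloisField 2 n) (habc : ¬(a = 0 ∧ b = 0 ∧ c = 0)) :
    (∑ x : GaloisField 2 n,
        if Algebra.trace (ZMod 2) (GaloisField 2 n)
            (a * x + b * x ^ (2 ^ k + 1) + c * x ^ (2 ^ (2 * k) + 1)) = 0
        then (1 : ℤ) else -1) ∈
      ({0, 2 ^ ((n + 1) / 2), -2 ^ ((n + 1) / 2),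
        2 ^ ((n + 3) / 2), -2 ^ ((n + 3) / 2)} : Set ℤ) :=
  stmt_1_general n k hn hkn a b c habc
end

section
/- Let n be odd and let k be a positive integer with gcd(k, n) = 1. Then for every nonempty subset T of the nonzero elements of L = GF(2^n) with |T| <= 6, the three sums \sum_{x \in T} x, \sum_{x \in T} x^{2^k+1} and \sum_{x \in T} x^{2^{2k}+1} are not all zero. (Equivalently, the binary code with parity checks x, x^{2^k+1}, x^{2^{2k}+1} has minimum distance at least 7.) -/
/-!
Let `σ x = x ^ 2 ^ k`. Since `gcd (2^k - 1) (2^n - 1) = 2^gcd(k,n) - 1 = 1`, the only fixed points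
of `σ` are `0` and `1`, so the polar form `P_σ x y = σ x * y + x * σ y` of `x ↦ σ x * x` vanishes
only when `x = 0`, `y = 0` or `x = y`.

List `T` as `x₁, …, x₆`, padded with zeros. Once `∑ xᵢ = 0`, the other two sums are sums of values
of polar forms: for `|T| ≤ 4` the second one is `P_σ (x₁ + x₃) (x₂ + x₃)`, which cannot vanish, and
for `|T| ≤ 6` they say `P_τ a b = P_τ c d` for `τ = σ, σ²`, where `a = x₁ + x₃`, `b = x₂ + x₃`,
`c = x₄ + x₆`, `d = x₅ + x₆`. In characteristic 2,
`P_σ (σ x + x) (σ y + y) = σ (P_σ x y) + P_σ x y + P_{σ²} x y`,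
so after scaling `(a, b, c, d)` to `(1, t, r, s)` the two equations give
`P_σ (σ r + r) (σ s + s) = 0`. This forces `d ∈ {a, b, a + b}`, i.e. `x₄ ∈ {x₁, x₂, x₃}`.
-/

section Polar

variable {R : Type*} [CommRing R]

def polar (σ : R →+* R) (x y : R) : R := σ x * y + x * σ y

theorem polar_mul_mul (σ : R →+* R) (a x y : R) :
    polar σ (a * x) (a * y) = a * σ a * polar σ x y := by
  simp only [polar, map_mul]
  ring

theorem polar_one_left (σ : R →+* R) (x : R) : polar σ 1 x = σ x + x := by
  simp [polar, add_comm]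

variable [CharP R 2]

theorem polar_map_add_self (σ : R →+* R) (x y : R) :
    polar σ (σ x + x) (σ y + y) = σ (polar σ x y) + polar σ x y + polar (σ.comp σ) x y := by
  simp only [polar, RingHom.comp_apply, map_add, map_mul]
  grind

end Polar

section FixedPoints

variable {F : Type*} [Field F] [CharP F 2] {σ : F →+* F} (hσ : ∀ x, σ x = x → x = 0 ∨ x = 1)
include hσ

theorem eq_zero_or_eq_one_of_map_add_self_eq_zero {x : F} (h : σ x + x = 0) : x = 0 ∨ x = 1 :=
  hσ x (CharTwo.add_eq_zero.mp h)

theorem eq_zero_or_eq_zero_or_eq_of_polar_eq_zero {x y : F} (h : polar σ x y = 0) :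
    x = 0 ∨ y = 0 ∨ x = y := by
  rcases eq_or_ne x 0 with hx | hx
  · exact Or.inl hx
  have hσx : σ x ≠ 0 := (map_ne_zero σ).mpr hx
  rw [show polar σ x y = x * σ x * (σ (y / x) + y / x) by
    rw [← polar_one_left, ← polar_mul_mul, mul_one, mul_div_cancel₀ _ hx]] at h
  rcases eq_zero_or_eq_one_of_map_add_self_eq_zero hσ
    ((mul_eq_zero.mp h).resolve_left (mul_ne_zero hx hσx)) with h | h
  · exact Or.inr (Or.inl ((div_eq_zero_iff.mp h).resolve_right hx))
  · exact Or.inr (Or.inr ((div_eq_one_iff_eq hx).mp h).symm)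

theorem eq_or_eq_add_one_of_map_add_self_eq {x y : F} (h : σ x + x = σ y + y) :
    y = x ∨ y = x + 1 := by
  have hxy : σ (x + y) + (x + y) = 0 := by
    rw [map_add]
    grind
  rcases eq_zero_or_eq_one_of_map_add_self_eq_zero hσ hxy with h | h
  · exact Or.inl (CharTwo.add_eq_zero.mp h).symm
  · exact Or.inr (by grind)

theorem eq_one_or_eq_or_eq_add_one_of_polar_eq {t r s : F} (hr : r ≠ 0) (hs : s ≠ 0)
    (hrs : r ≠ s) (h₁ : polar σ 1 t = polar σ r s)
    (h₂ : polar (σ.comp σ) 1 t = polar (σ.comp σ) r s) :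
    s = 1 ∨ s = t ∨ s = t + 1 := by
  have key : polar σ (σ r + r) (σ s + s) = 0 := by
    rw [polar_map_add_self, ← h₁, ← h₂, ← polar_map_add_self, map_one, CharTwo.add_self_eq_zero]
    simp [polar]
  rw [polar_one_left] at h₁
  rcases eq_zero_or_eq_zero_or_eq_of_polar_eq_zero hσ key with hθr | hθs | hθ
  · obtain rfl : r = 1 := (eq_zero_or_eq_one_of_map_add_self_eq_zero hσ hθr).resolve_left hr
    rw [polar_one_left] at h₁
    exact Or.inr (eq_or_eq_add_one_of_map_add_self_eq hσ h₁)
  · exact Or.inl ((eq_zero_or_eq_one_of_map_add_self_eq_zero hσ hθs).resolve_left hs)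
  · obtain rfl : s = r + 1 := (eq_or_eq_add_one_of_map_add_self_eq hσ hθ).resolve_left hrs.symm
    have hθt : σ t + t = σ r + r := by
      simp only [h₁, polar, map_add, map_one]
      grind
    rcases eq_or_eq_add_one_of_map_add_self_eq hσ hθt with rfl | rfl
    · exact Or.inr (Or.inr rfl)
    · exact Or.inr (Or.inl (by grind))

theorem eq_or_eq_or_eq_add_of_polar_eq {a b c d : F} (ha : a ≠ 0) (hc : c ≠ 0) (hd : d ≠ 0)
    (hcd : c ≠ d) (h₁ : polar σ a b = polar σ c d)
    (h₂ : polar (σ.comp σ) a b = polar (σ.comp σ) c d) :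
    d = a ∨ d = b ∨ d = b + a := by
  have normalize : ∀ τ : F →+* F, polar τ a b = polar τ c d →
      polar τ 1 (b / a) = polar τ (c / a) (d / a) := by
    intro τ h
    refine mul_left_cancel₀ (mul_ne_zero ha ((map_ne_zero τ).mpr ha)) ?_
    rwa [← polar_mul_mul, ← polar_mul_mul, mul_one, mul_div_cancel₀ _ ha, mul_div_cancel₀ _ ha,
      mul_div_cancel₀ _ ha]
  rcases eq_one_or_eq_or_eq_add_one_of_polar_eq hσ (div_ne_zero hc ha) (div_ne_zero hd ha)
    (by rwa [Ne, div_left_inj' ha]) (normalize σ h₁) (normalize _ h₂) with h | h | h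
  · exact Or.inl ((div_eq_one_iff_eq ha).mp h)
  · exact Or.inr (Or.inl ((div_left_inj' ha).mp h))
  · rw [div_eq_iff ha, add_mul, div_mul_cancel₀ _ ha, one_mul] at h
    exact Or.inr (Or.inr h)

end FixedPoints

section Codeword

variable {F : Type*} [Field F]

/-- `l` lists the support of a word of the binary code with parity checks `x`, `σ x * x` and
`σ (σ x) * x`. -/
def IsCodeword (σ : F →+* F) (l : List F) : Prop :=
  l.sum = 0 ∧ (l.map fun x => σ x * x).sum = 0 ∧ (l.map fun x => σ (σ x) * x).sum = 0

theorem IsCodeword.append_zero {σ : F →+* F} {l : List F} (h : IsCodeword σ l) :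
    IsCodeword σ (l ++ [0]) := by
  simpa [IsCodeword] using h

variable [CharP F 2] {σ : F →+* F} (hσ : ∀ x, σ x = x → x = 0 ∨ x = 1)
include hσ

theorem not_isCodeword_four {x₁ x₂ x₃ x₄ : F} (h₁₂ : x₁ ≠ x₂) (h₁₃ : x₁ ≠ x₃) (h₂₃ : x₂ ≠ x₃) :
    ¬IsCodeword σ [x₁, x₂, x₃, x₄] := by
  rintro ⟨hs, hq, -⟩
  simp only [List.sum_cons, List.sum_nil, List.map_cons, List.map_nil] at hs hq
  have hx₄ : x₄ = x₁ + x₂ + x₃ := by grind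
  have : polar σ (x₁ + x₃) (x₂ + x₃) = 0 := by
    subst hx₄
    simp only [polar, map_add] at hq ⊢
    grind
  rcases eq_zero_or_eq_zero_or_eq_of_polar_eq_zero hσ this with h | h | h
  · exact h₁₃ (CharTwo.add_eq_zero.mp h)
  · exact h₂₃ (CharTwo.add_eq_zero.mp h)
  · exact h₁₂ (add_right_cancel h)

theorem not_isCodeword_six {x₁ x₂ x₃ x₄ x₅ x₆ : F} (h₁₃ : x₁ ≠ x₃) (h₁₄ : x₁ ≠ x₄)
    (h₂₄ : x₂ ≠ x₄) (h₃₄ : x₃ ≠ x₄) (h₄₅ : x₄ ≠ x₅) (h₄₆ : x₄ ≠ x₆) (h₅₆ : x₅ ≠ x₆) :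
    ¬IsCodeword σ [x₁, x₂, x₃, x₄, x₅, x₆] := by
  rintro ⟨hs, hq, hq₂⟩
  simp only [List.sum_cons, List.sum_nil, List.map_cons, List.map_nil] at hs hq hq₂
  have hx₆ : x₆ = x₁ + x₂ + x₃ + x₄ + x₅ := by grind
  have h₁ : polar σ (x₁ + x₃) (x₂ + x₃) = polar σ (x₄ + x₆) (x₅ + x₆) := by
    subst hx₆
    simp only [polar, map_add] at hq ⊢
    grind
  have h₂ : polar (σ.comp σ) (x₁ + x₃) (x₂ + x₃) = polar (σ.comp σ) (x₄ + x₆) (x₅ + x₆) := by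
    subst hx₆
    simp only [polar, RingHom.comp_apply, map_add] at hq₂ ⊢
    grind
  rcases eq_or_eq_or_eq_add_of_polar_eq hσ (by grind) (by grind) (by grind) (by grind) h₁ h₂
    with h | h | h <;> grind

theorem six_lt_length_of_isCodeword {l : List F} (hl : IsCodeword σ l) (hnd : l.Nodup)
    (h0 : 0 ∉ l) (hne : l ≠ []) : 6 < l.length := by
  by_contra! hlen
  match l, hl, hnd, h0, hne, hlen with
  | [x₁], hl, _, h0, _, _ =>
    simp_all [IsCodeword]
  | [x₁, x₂], hl, hnd, h0, _, _ =>
    simp only [List.nodup_cons, List.mem_cons, not_or] at hnd h0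
    exact not_isCodeword_four hσ (by tauto) (by tauto) (by tauto) hl.append_zero.append_zero
  | [x₁, x₂, x₃], hl, hnd, h0, _, _ =>
    simp only [List.nodup_cons, List.mem_cons, not_or] at hnd h0
    exact not_isCodeword_four hσ (by tauto) (by tauto) (by tauto) hl.append_zero
  | [x₁, x₂, x₃, x₄], hl, hnd, h0, _, _ =>
    simp only [List.nodup_cons, List.mem_cons, not_or] at hnd h0
    exact not_isCodeword_four hσ (by tauto) (by tauto) (by tauto) hl
  | [x₁, x₂, x₃, x₄, x₅], hl, hnd, h0, _, _ =>
    simp only [List.nodup_cons, List.mem_cons, not_or] at hnd h0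
    exact not_isCodeword_six hσ (by tauto) (by tauto) (by tauto) (by tauto) (by tauto) (by tauto)
      (by tauto) hl.append_zero
  | [x₁, x₂, x₃, x₄, x₅, x₆], hl, hnd, h0, _, _ =>
    simp only [List.nodup_cons, List.mem_cons, not_or] at hnd h0
    exact not_isCodeword_six hσ (by tauto) (by tauto) (by tauto) (by tauto) (by tauto) (by tauto)
      (by tauto) hl
  | _ :: _ :: _ :: _ :: _ :: _ :: _ :: _, _, _, _, _, hlen =>
    simp only [List.length_cons] at hlen
    omega

end Codeword

theorem eq_zero_or_eq_one_of_pow_two_pow_eq_self {K : Type*} [Field K] [Finite K] {n k : ℕ}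
    (hK : Nat.card K = 2 ^ n) (hkn : k.gcd n = 1) {x : K} (hx : x ^ 2 ^ k = x) : x = 0 ∨ x = 1 := by
  rcases eq_or_ne x 0 with hx0 | hx0
  · exact Or.inl hx0
  have hk : x ^ (2 ^ k - 1) = 1 := by
    rwa [← mul_eq_right₀ hx0, pow_sub_one_mul (pow_ne_zero k two_ne_zero)]
  have hn : x ^ (2 ^ n - 1) = 1 := by
    have := Fintype.ofFinite K
    rw [← hK, Nat.card_eq_fintype_card]
    exact FiniteField.pow_card_sub_one_eq_one x hx0
  exact Or.inr (by simpa [hkn] using pow_gcd_eq_one.mpr ⟨hk, hn⟩)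

theorem stmt_4_general (n k : ℕ) (hn : Odd n) (hkn : Nat.gcd k n = 1)
    (T : Finset (GaloisField 2 n)) (hT : T.Nonempty) (hT0 : ∀ x ∈ T, x ≠ 0)
    (hcard : T.card ≤ 6) :
    ¬((∑ x ∈ T, x) = 0 ∧ (∑ x ∈ T, x ^ (2 ^ k + 1)) = 0 ∧
      (∑ x ∈ T, x ^ (2 ^ (2 * k) + 1)) = 0) := by
  set σ := iterateFrobenius (GaloisField 2 n) 2 k
  have hσ : ∀ x, σ x = x → x = 0 ∨ x = 1 := fun x hx =>
    eq_zero_or_eq_one_of_pow_two_pow_eq_self (GaloisField.card 2 n hn.pos.ne') hkn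
      (by rwa [iterateFrobenius_def] at hx)
  have hσ₁ (x : GaloisField 2 n) : x ^ (2 ^ k + 1) = σ x * x := by
    rw [pow_succ, iterateFrobenius_def]
  have hσ₂ (x : GaloisField 2 n) : x ^ (2 ^ (2 * k) + 1) = σ (σ x) * x := by
    rw [pow_succ, iterateFrobenius_def, iterateFrobenius_def, ← pow_mul, ← pow_add, two_mul]
  intro hcode
  have := six_lt_length_of_isCodeword hσ (l := T.toList)
    (by simpa only [IsCodeword, Finset.sum_map_toList, Finset.sum_toList, hσ₁, hσ₂] using hcode)
    T.nodup_toList (by simpa using hT0) (by simpa using hT.ne_empty)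
  rw [Finset.length_toList] at this
  omega

/-- The code with parity checks `x, x^{2^k+1}, x^{2^{2k}+1}` has minimum distance at least 7:
no nonempty set of at most 6 nonzero field elements has all three power sums vanish. -/
theorem stmt_4 (n k : ℕ) (hn : Odd n) (hk : 0 < k) (hkn : Nat.gcd k n = 1)
    (T : Finset (GaloisField 2 n)) (hT : T.Nonempty) (hT0 : ∀ x ∈ T, x ≠ 0)
    (hcard : T.card ≤ 6) :
    ¬((∑ x ∈ T, x) = 0 ∧ (∑ x ∈ T, x ^ (2 ^ k + 1)) = 0 ∧
      (∑ x ∈ T, x ^ (2 ^ (2 * k) + 1)) = 0) :=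
  stmt_4_general n k hn hkn T hT hT0 hcard
end

section
/- Let n be odd and let k be a positive integer with gcd(k, n) = 1. Then for every nonempty subset T of the nonzero elements of L = GF(2^n) with |T| <= 6, the three sums \sum_{x \in T} x, \sum_{x \in T} x^{2^k+1} and \sum_{x \in T} x^{2^{3k}+1} are not all zero. (Equivalently, the binary code with parity checks x, x^{2^k+1}, x^{2^{3k}+1} has minimum distance at least 7.) -/
/-- In a ring with `2 = 0`, if `p + q = 0` then `p = q`. -/
private lemma char2_eq_of_add_eq_zero {K : Type*} [CommRing K] (h2 : (2 : K) = 0)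
    {p q : K} (h : p + q = 0) : p = q := by
  linear_combination h - q * h2

/-- Fixed points of a power of Frobenius with exponent coprime to `n` lie in `GF(2)`. -/
private lemma fix_aux (n : ℕ) (hn0 : n ≠ 0) (m : ℕ) (hm : Nat.gcd m n = 1)
    (x : GaloisField 2 n) (hx : x ^ 2 ^ m = x) : x = 0 ∨ x = 1 := by
  letI : Fintype (GaloisField 2 n) := Fintype.ofFinite _
  have hcardn : x ^ 2 ^ n = x := by
    have hcard : Fintype.card (GaloisField 2 n) = 2 ^ n := by
      rw [← Nat.card_eq_fintype_card]
      exact GaloisField.card 2 n hn0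
    rw [← hcard]
    exact FiniteField.pow_card x
  have descent : ∀ a b : ℕ, x ^ 2 ^ a = x → x ^ 2 ^ b = x → x ^ 2 ^ Nat.gcd a b = x := by
    intro a b
    induction a, b using Nat.gcd.induction with
    | H0 q => intro _ h; simpa using h
    | H1 p q hp IH =>
      intro hxp hxq
      rw [Nat.gcd_rec]
      refine IH ?_ hxp
      have hmul : ∀ t : ℕ, x ^ 2 ^ (p * t) = x := by
        intro t
        induction t with
        | zero => simp
        | succ t ih =>
          have hh : p * (t + 1) = p * t + p := by ring
          rw [hh, pow_add, pow_mul, ih]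
          exact hxp
      have hinj : Function.Injective fun y : GaloisField 2 n => y ^ 2 ^ (p * (q / p)) := by
        have hcoe : (fun y : GaloisField 2 n => y ^ 2 ^ (p * (q / p)))
            = (frobenius (GaloisField 2 n) 2)^[p * (q / p)] := by
          funext y
          rw [iterate_frobenius]
        rw [hcoe]
        exact Function.Injective.iterate (frobenius_inj _ 2) _
      apply hinj
      show (x ^ 2 ^ (q % p)) ^ 2 ^ (p * (q / p)) = x ^ 2 ^ (p * (q / p))
      calc (x ^ 2 ^ (q % p)) ^ 2 ^ (p * (q / p))
          = x ^ (2 ^ (q % p) * 2 ^ (p * (q / p))) := by rw [← pow_mul]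
        _ = x ^ 2 ^ (q % p + p * (q / p)) := by rw [← pow_add]
        _ = x ^ 2 ^ q := by rw [Nat.mod_add_div]
        _ = x := hxq
        _ = x ^ 2 ^ (p * (q / p)) := (hmul _).symm
  have h2x := descent m n hx hcardn
  rw [hm, pow_one] at h2x
  have hxx : x * (x - 1) = 0 := by linear_combination h2x
  rcases mul_eq_zero.mp hxx with h | h
  · exact Or.inl h
  · exact Or.inr (by linear_combination h)

/-- No 4 distinct points with vanishing first two power sums (APN property of `x^{q+1}`). -/
private lemma core4 {K : Type*} [Field K] (h2 : (2 : K) = 0) (F : K →+* K)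
    (hfix1 : ∀ x : K, F x = x → x = 0 ∨ x = 1)
    (a b c d : K) (hab : a ≠ b) (hac : a ≠ c) (hbc : b ≠ c)
    (hsum : a + b + c + d = 0)
    (hP : F a * a + F b * b + F c * c + F d * d = 0) : False := by
  have hd : d = a + b + c := by linear_combination hsum - (a + b + c) * h2
  subst hd
  simp only [map_add] at hP
  have key : (F a + F c) * (a + b) + (a + c) * (F a + F b) = 0 := by
    linear_combination hP - (F b * b + F c * c) * h2
  have hs : a + b ≠ 0 := fun h => hab (char2_eq_of_add_eq_zero h2 h)
  have hu : a + c ≠ 0 := fun h => hac (char2_eq_of_add_eq_zero h2 h)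
  have hFinj : Function.Injective F := F.injective
  have hFs : F (a + b) ≠ 0 := fun h => hs (hFinj (by rw [map_zero]; exact h))
  have hdiv : F ((a + c) / (a + b)) = (a + c) / (a + b) := by
    rw [map_div₀, div_eq_div_iff hFs hs]
    simp only [map_add]
    linear_combination key - ((a + c) * (F a + F b)) * h2
  rcases hfix1 _ hdiv with h | h
  · exact hu ((div_eq_zero_iff.mp h).resolve_right hs)
  · have hcb : a + c = a + b := (div_eq_one_iff_eq hs).mp h
    exact hbc (add_left_cancel hcb).symm

/-- No 6 distinct points with all three power sums vanishing. -/
private lemma core6 {K : Type*} [Field K] (h2 : (2 : K) = 0) (F : K →+* K)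
    (hfix1 : ∀ x : K, F x = x → x = 0 ∨ x = 1)
    (hfix2 : ∀ x : K, F (F x) = x → x = 0 ∨ x = 1)
    (x1 x2 x3 x4 x5 x6 : K)
    (h12 : x1 ≠ x2) (h34 : x3 ≠ x4) (h56 : x5 ≠ x6)
    (h35 : x3 ≠ x5) (h45 : x4 ≠ x5) (h36 : x3 ≠ x6) (h46 : x4 ≠ x6)
    (hsum : x1 + x2 + x3 + x4 + x5 + x6 = 0)
    (hP : F x1 * x1 + F x2 * x2 + F x3 * x3 + F x4 * x4 + F x5 * x5 + F x6 * x6 = 0)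
    (hQ : F (F (F x1)) * x1 + F (F (F x2)) * x2 + F (F (F x3)) * x3 + F (F (F x4)) * x4 +
      F (F (F x5)) * x5 + F (F (F x6)) * x6 = 0) : False := by
  have hx6 : x6 = x1 + x2 + x3 + x4 + x5 := by
    linear_combination hsum - (x1 + x2 + x3 + x4 + x5) * h2
  subst hx6
  simp only [map_add] at hP hQ
  have hFinj : Function.Injective F := F.injective
  have hF0 : ∀ y : K, y ≠ 0 → F y ≠ 0 := fun y hy h => hy (hFinj (by rw [map_zero]; exact h))
  have hs1 : x1 + x2 ≠ 0 := fun h => h12 (char2_eq_of_add_eq_zero h2 h)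
  have hs2 : x3 + x4 ≠ 0 := fun h => h34 (char2_eq_of_add_eq_zero h2 h)
  have key1 : (F x1 + F x5) * (x1 + x2) + (F x1 + F x2) * (x1 + x5) + (F x3 + F x5) * (x3 + x4)
      + (F x3 + F x4) * (x3 + x5) + (F x1 + F x2) * (x3 + x4) + (F x3 + F x4) * (x1 + x2)
      = 0 := by
    linear_combination hP - (F x2 * x2 + F x4 * x4 + F x5 * x5) * h2
  have key3 : (F (F (F x1)) + F (F (F x5))) * (x1 + x2) + (F (F (F x1)) + F (F (F x2))) * (x1 + x5)
      + (F (F (F x3)) + F (F (F x5))) * (x3 + x4) + (F (F (F x3)) + F (F (F x4))) * (x3 + x5)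
      + (F (F (F x1)) + F (F (F x2))) * (x3 + x4) + (F (F (F x3)) + F (F (F x4))) * (x1 + x2)
      = 0 := by
    linear_combination hQ - (F (F (F x2)) * x2 + F (F (F x4)) * x4 + F (F (F x5)) * x5) * h2
  set u := (x1 + x5) / (x1 + x2) with hu_def
  set v := (x3 + x5) / (x1 + x2) with hv_def
  set s := (x3 + x4) / (x1 + x2) with hs_def
  have eu : u * (x1 + x2) = x1 + x5 := div_mul_cancel₀ _ hs1
  have ev : v * (x1 + x2) = x3 + x5 := div_mul_cancel₀ _ hs1
  have es : s * (x1 + x2) = x3 + x4 := div_mul_cancel₀ _ hs1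
  have eFu : F u * (F x1 + F x2) = F x1 + F x5 := by
    have h := congrArg F eu; simp only [map_mul, map_add] at h; exact h
  have eFv : F v * (F x1 + F x2) = F x3 + F x5 := by
    have h := congrArg F ev; simp only [map_mul, map_add] at h; exact h
  have eFs : F s * (F x1 + F x2) = F x3 + F x4 := by
    have h := congrArg F es; simp only [map_mul, map_add] at h; exact h
  have eF3u : F (F (F u)) * (F (F (F x1)) + F (F (F x2))) = F (F (F x1)) + F (F (F x5)) := by
    have h := congrArg F (congrArg F (congrArg F eu))
    simp only [map_mul, map_add] at h; exact h
  have eF3v : F (F (F v)) * (F (F (F x1)) + F (F (F x2))) = F (F (F x3)) + F (F (F x5)) := by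
    have h := congrArg F (congrArg F (congrArg F ev))
    simp only [map_mul, map_add] at h; exact h
  have eF3s : F (F (F s)) * (F (F (F x1)) + F (F (F x2))) = F (F (F x3)) + F (F (F x4)) := by
    have h := congrArg F (congrArg F (congrArg F es))
    simp only [map_mul, map_add] at h; exact h
  have hs1F : F x1 + F x2 ≠ 0 := by
    have h := hF0 _ hs1; simp only [map_add] at h; exact h
  have hs1F3 : F (F (F x1)) + F (F (F x2)) ≠ 0 := by
    have h := hF0 _ (hF0 _ (hF0 _ hs1)); simp only [map_add] at h; exact h
  have hP' : F u + u + s * F v + F s * v + s + F s = 0 := by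
    have hfac : (x1 + x2) * (F x1 + F x2) ≠ 0 := mul_ne_zero hs1 hs1F
    apply mul_left_cancel₀ hfac
    rw [mul_zero]
    linear_combination key1 + (x1 + x2) * eFu + (F x1 + F x2) * eu + (s * (x1 + x2)) * eFv
      + (F x3 + F x5) * es + (v * (x1 + x2)) * eFs + (F x3 + F x4) * ev + (F x1 + F x2) * es
      + (x1 + x2) * eFs
  have hQ' : F (F (F u)) + u + s * F (F (F v)) + F (F (F s)) * v + s + F (F (F s)) = 0 := by
    have hfac : (x1 + x2) * (F (F (F x1)) + F (F (F x2))) ≠ 0 := mul_ne_zero hs1 hs1F3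
    apply mul_left_cancel₀ hfac
    rw [mul_zero]
    linear_combination key3 + (x1 + x2) * eF3u + (F (F (F x1)) + F (F (F x2))) * eu
      + (s * (x1 + x2)) * eF3v + (F (F (F x3)) + F (F (F x5))) * es + (v * (x1 + x2)) * eF3s
      + (F (F (F x3)) + F (F (F x4))) * ev + (F (F (F x1)) + F (F (F x2))) * es
      + (x1 + x2) * eF3s
  have hP'1 : F (F u) + F u + F s * F (F v) + F (F s) * F v + F s + F (F s) = 0 := by
    have h := congrArg F hP'
    simp only [map_add, map_mul, map_zero] at h
    linear_combination h
  have hP'2 : F (F (F u)) + F (F u) + F (F s) * F (F (F v)) + F (F (F s)) * F (F v) + F (F s)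
      + F (F (F s)) = 0 := by
    have h := congrArg F hP'1
    simp only [map_add, map_mul, map_zero] at h
    linear_combination h
  have KEY : (F s + F (F (F s))) * (v + F (F v)) + (s + F (F s)) * (F v + F (F (F v))) = 0 := by
    linear_combination hP' + hP'1 + hP'2 + hQ'
      - (u + F u + F (F u) + F (F (F u)) + s + F s + F (F s) + F (F (F s))) * h2
  have hs0 : s ≠ 0 := by rw [hs_def]; exact div_ne_zero hs2 hs1
  by_cases hS : s + F (F s) = 0
  · rcases hfix2 s (char2_eq_of_add_eq_zero h2 hS).symm with h | h
    · exact hs0 h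
    · refine h56 ?_
      rw [h, one_mul] at es
      linear_combination - es - (x3 + x4) * h2
  · by_cases hW : v + F (F v) = 0
    · rcases hfix2 v (char2_eq_of_add_eq_zero h2 hW).symm with h | h
      · rw [h, zero_mul] at ev
        exact h35 (char2_eq_of_add_eq_zero h2 ev.symm)
      · rw [h, one_mul] at ev
        exact h46 (by linear_combination - ev - (x3 + x5) * h2)
    · have hkey2 : (F v + F (F (F v))) * (s + F (F s)) = (v + F (F v)) * (F s + F (F (F s))) := by
        linear_combination KEY - ((v + F (F v)) * (F s + F (F (F s)))) * h2
      have hFS : F s + F (F (F s)) ≠ 0 := fun h =>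
        hS (hFinj (by rw [map_zero, map_add]; exact h))
      have hdiv : F ((v + F (F v)) / (s + F (F s))) = (v + F (F v)) / (s + F (F s)) := by
        rw [map_div₀, map_add, map_add, div_eq_div_iff hFS hS]
        exact hkey2
      rcases hfix1 _ hdiv with h | h
      · exact hW ((div_eq_zero_iff.mp h).resolve_right hS)
      · have hWS : v + F (F v) = s + F (F s) := (div_eq_one_iff_eq hS).mp h
        have hvs : F (F (v + s)) = v + s := by
          simp only [map_add]
          linear_combination - hWS + (F (F v) - s) * h2
        rcases hfix2 _ hvs with h' | h'
        · have hv : v = s := char2_eq_of_add_eq_zero h2 h'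
          exact h45 (by linear_combination ev - es - (x1 + x2) * hv)
        · exact h36 (by linear_combination (x1 + x2) * h' - ev - es - (x3 + x4 + x5) * h2)

/-- The even-cardinality case: no nonempty set of at most 7 (hence 2, 4, or 6) distinct elements
with all three power sums vanishing. -/
private lemma even_case {K : Type*} [Field K] (h2 : (2 : K) = 0) (F : K →+* K)
    (hfix1 : ∀ x : K, F x = x → x = 0 ∨ x = 1)
    (hfix2 : ∀ x : K, F (F x) = x → x = 0 ∨ x = 1)
    (S : Finset K) (hS : S.Nonempty) (hc : S.card ≤ 7) (he : Even S.card)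
    (e1 : ∑ x ∈ S, x = 0) (e2 : ∑ x ∈ S, F x * x = 0)
    (e3 : ∑ x ∈ S, F (F (F x)) * x = 0) : False := by
  classical
  have hpos : 0 < S.card := hS.card_pos
  have hcase : S.card = 2 ∨ S.card = 4 ∨ S.card = 6 := by
    obtain ⟨r, hr⟩ := he; omega
  rcases hcase with h | h | h
  · obtain ⟨a, b, hab, rfl⟩ := Finset.card_eq_two.mp h
    rw [Finset.sum_pair hab] at e1
    exact hab (char2_eq_of_add_eq_zero h2 e1)
  · obtain ⟨a, t, hat, rfl, ht3⟩ := Finset.card_eq_succ.mp (show _ = 3 + 1 from h)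
    obtain ⟨b, c, d, hbc, hbd, hcd, rfl⟩ := Finset.card_eq_three.mp ht3
    have hb' : b ∉ ({c, d} : Finset K) := by simp [hbc, hbd]
    have hc' : c ∉ ({d} : Finset K) := by simp [hcd]
    rw [Finset.sum_insert hat, Finset.sum_insert hb', Finset.sum_insert hc',
      Finset.sum_singleton] at e1 e2
    simp only [Finset.mem_insert, Finset.mem_singleton, not_or] at hat
    obtain ⟨hab, hac, had⟩ := hat
    exact core4 h2 F hfix1 a b c d hab hac hbc (by linear_combination e1) (by linear_combination e2)
  · obtain ⟨a, t5, ha5, rfl, h5⟩ := Finset.card_eq_succ.mp (show _ = 5 + 1 from h)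
    obtain ⟨b, t4, hb4, rfl, h4⟩ := Finset.card_eq_succ.mp (show _ = 4 + 1 from h5)
    obtain ⟨c, t3, hc3, rfl, h3⟩ := Finset.card_eq_succ.mp (show _ = 3 + 1 from h4)
    obtain ⟨d, e, f, hde, hdf, hef, rfl⟩ := Finset.card_eq_three.mp h3
    have hd' : d ∉ ({e, f} : Finset K) := by simp [hde, hdf]
    have he' : e ∉ ({f} : Finset K) := by simp [hef]
    rw [Finset.sum_insert ha5, Finset.sum_insert hb4, Finset.sum_insert hc3,
      Finset.sum_insert hd', Finset.sum_insert he', Finset.sum_singleton] at e1 e2 e3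
    simp only [Finset.mem_insert, Finset.mem_singleton, not_or] at ha5 hb4 hc3
    obtain ⟨hab, hac, had, hae, haf⟩ := ha5
    obtain ⟨hbc, hbd, hbe, hbf⟩ := hb4
    obtain ⟨hcd, hce, hcf⟩ := hc3
    exact core6 h2 F hfix1 hfix2 a b c d e f hab hcd hef hce hde hcf hdf
      (by linear_combination e1) (by linear_combination e2) (by linear_combination e3)

/-- The code with parity checks `x, x^{2^k+1}, x^{2^{3k}+1}` has minimum distance at least 7:
no nonempty set of at most 6 nonzero field elements has all three power sums vanish. -/
theorem stmt_5 (n k : ℕ) (hn : Odd n) (hk : 0 < k) (hkn : Nat.gcd k n = 1)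
    (T : Finset (GaloisField 2 n)) (hT : T.Nonempty) (hT0 : ∀ x ∈ T, x ≠ 0)
    (hcard : T.card ≤ 6) :
    ¬((∑ x ∈ T, x) = 0 ∧ (∑ x ∈ T, x ^ (2 ^ k + 1)) = 0 ∧
      (∑ x ∈ T, x ^ (2 ^ (3 * k) + 1)) = 0) := by
  rintro ⟨e1, e2, e3⟩
  classical
  have hn0 : n ≠ 0 := by rcases hn with ⟨j, hj⟩; omega
  have h2 : (2 : GaloisField 2 n) = 0 := by
    have h := CharP.cast_eq_zero (GaloisField 2 n) 2
    exact_mod_cast h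
  set F : GaloisField 2 n →+* GaloisField 2 n := iterateFrobenius (GaloisField 2 n) 2 k with hF_def
  have hF : ∀ x : GaloisField 2 n, F x = x ^ 2 ^ k := fun x => rfl
  have hfix1 : ∀ x : GaloisField 2 n, F x = x → x = 0 ∨ x = 1 := fun x hx =>
    fix_aux n hn0 k hkn x (by rw [← hF]; exact hx)
  have hgcd2 : Nat.gcd (k + k) n = 1 := by
    have h2n : Nat.Coprime 2 n := Nat.coprime_two_left.mpr hn
    have hmul : Nat.Coprime (2 * k) n := Nat.Coprime.mul h2n hkn
    rwa [two_mul] at hmul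
  have hfix2 : ∀ x : GaloisField 2 n, F (F x) = x → x = 0 ∨ x = 1 := by
    intro x hx
    refine fix_aux n hn0 (k + k) hgcd2 x ?_
    calc x ^ 2 ^ (k + k) = (x ^ 2 ^ k) ^ 2 ^ k := by rw [pow_add, pow_mul]
      _ = F (F x) := by rw [hF, hF]
      _ = x := hx
  have hPow1 : ∀ x : GaloisField 2 n, F x * x = x ^ (2 ^ k + 1) := fun x => by
    rw [hF, pow_add, pow_one]
  have hexp : 2 ^ k * (2 ^ k * 2 ^ k) = 2 ^ (3 * k) := by
    rw [← pow_add, ← pow_add]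
    congr 1
    ring
  have hPow3 : ∀ x : GaloisField 2 n, F (F (F x)) * x = x ^ (2 ^ (3 * k) + 1) := fun x => by
    rw [hF, hF, hF, ← pow_mul, ← pow_mul, hexp, ← pow_succ]
  have e2' : ∑ x ∈ T, F x * x = 0 := by
    rw [Finset.sum_congr rfl fun x _ => hPow1 x]
    exact e2
  have e3' : ∑ x ∈ T, F (F (F x)) * x = 0 := by
    rw [Finset.sum_congr rfl fun x _ => hPow3 x]
    exact e3
  rcases Nat.even_or_odd T.card with he | ho
  · exact even_case h2 F hfix1 hfix2 T hT (by omega) he e1 e2' e3'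
  · have h0T : (0 : GaloisField 2 n) ∉ T := fun h => hT0 0 h rfl
    refine even_case h2 F hfix1 hfix2 (insert 0 T) (Finset.insert_nonempty _ _) ?_ ?_ ?_ ?_ ?_
    · rw [Finset.card_insert_of_notMem h0T]; omega
    · rw [Finset.card_insert_of_notMem h0T]; exact ho.add_one
    · rw [Finset.sum_insert h0T, e1, add_zero]
    · rw [Finset.sum_insert h0T, e2', mul_zero, add_zero]
    · rw [Finset.sum_insert h0T, e3', mul_zero, add_zero]
end

section
/- Let a_1, ..., a_m be elements of L = GF(2^n) and k_1, ..., k_m positive integers, and set Q(x) = \sum_{i=1}^m a_i x^{2^{k_i}+1} and L(u) = \sum_{i=1}^m ( a_i u^{2^{k_i}} + a_i^{2^{-k_i}} u^{2^{-k_i}} ). Then the square of the exponential sum satisfies ( \sum_{x \in L} (-1)^{Tr(Q(x))} )^2 = 2^n \cdot \sum_{u \in K} (-1)^{Tr(Q(u))}, where K = { u \in L : L(u) = 0 }. -/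
/-- `ipow j x` is `x^{2^{-j}}`, the unique element of `GF(2^n)` whose `2^j`-th power is `x`
(the inverse of the `j`-th iterate of the Frobenius automorphism). -/
noncomputable def ipow {n : ℕ} (j : ℕ) (x : GaloisField 2 n) : GaloisField 2 n :=
  Function.invFun (fun y : GaloisField 2 n => y ^ 2 ^ j) x

/-!
Squaring the sum and substituting `y = x + u` gives `∑ᵤ ∑ₓ (-1)^{Tr(Q(x) + Q(x+u))}`. Since
`(x+u)^{2^k+1} + x^{2^k+1} = u^{2^k+1} + x u^{2^k} + x^{2^k} u` in characteristic 2 and the trace is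
invariant under Frobenius, `Tr(a x^{2^k} u) = Tr(x a^{2^{-k}} u^{2^{-k}})`, so
`Tr(Q(x) + Q(x+u)) = Tr(Q(u) + x L(u))`. The inner sum over `x` is then a complete character sum of
the linear form `x ↦ Tr(x L(u))`, equal to `2^n` if `L(u) = 0` and to `0` otherwise.
-/

open Finset

theorem sq_sum_addChar_eq_card_mul_sum_ker {R R' : Type*} [CommRing R] [Fintype R] [CommRing R']
    [IsDomain R'] {ψ : AddChar R R'} (hψ : ψ.IsPrimitive) (Q L : R → R)
    [DecidablePred fun u => L u = 0] (hQL : ∀ x u, ψ (Q x + Q (x + u)) = ψ (Q u + x * L u)) :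
    (∑ x, ψ (Q x)) ^ 2 = Fintype.card R * ∑ u ∈ univ.filter (fun u => L u = 0), ψ (Q u) := by
  calc (∑ x, ψ (Q x)) ^ 2
      = ∑ x, ∑ u, ψ (Q x + Q (x + u)) := by
        rw [sq, sum_mul_sum]
        refine sum_congr rfl fun x _ => (Fintype.sum_equiv (Equiv.addLeft x) _ _ fun u => ?_).symm
        rw [Equiv.coe_addLeft, AddChar.map_add_eq_mul]
    _ = ∑ u, ψ (Q u) * ∑ x, ψ (x * L u) := by
        rw [sum_comm]
        simp only [hQL, AddChar.map_add_eq_mul, mul_sum]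
    _ = Fintype.card R * ∑ u ∈ univ.filter (fun u => L u = 0), ψ (Q u) := by
        classical
        simp only [AddChar.sum_mulShift _ hψ, mul_sum, sum_filter]
        refine sum_congr rfl fun u _ => ?_
        split_ifs <;> simp [mul_comm]

section TraceSign

variable (F : Type*) [Field F] [Algebra (ZMod 2) F]

noncomputable def traceSign : AddChar F ℤ :=
  (AddChar.zmodChar 2 (by norm_num : (-1 : ℤ) ^ 2 = 1)).compAddMonoidHom
    (Algebra.trace (ZMod 2) F).toAddMonoidHom

variable {F}

theorem traceSign_apply (x : F) :
    traceSign F x = if Algebra.trace (ZMod 2) F x = 0 then 1 else -1 := by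
  change (-1 : ℤ) ^ (Algebra.trace (ZMod 2) F x).val = _
  generalize Algebra.trace (ZMod 2) F x = t
  fin_cases t <;> rfl

theorem isPrimitive_traceSign [Finite F] : (traceSign F).IsPrimitive := by
  refine AddChar.IsPrimitive.of_ne_one (AddChar.ne_one_iff.2 ?_)
  obtain ⟨x, hx⟩ := Algebra.trace_surjective (ZMod 2) F 1
  exact ⟨x, by simp [traceSign_apply, hx]⟩

end TraceSign

theorem FiniteField.trace_pow_card_pow (K : Type*) {L : Type*} [Field K] [Fintype K] [Field L]
    [Algebra K L] [Algebra.IsAlgebraic K L] (x : L) (k : ℕ) :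
    Algebra.trace K L (x ^ Fintype.card K ^ k) = Algebra.trace K L x := by
  have hfrob : (FiniteField.frobeniusAlgEquivOfAlgebraic K L ^ k) x = x ^ Fintype.card K ^ k := by
    rw [AlgEquiv.coe_pow, FiniteField.coe_frobeniusAlgEquivOfAlgebraic_iterate]
  rw [← hfrob, Algebra.trace_eq_of_algEquiv]

theorem add_pow_two_pow_add_one {R : Type*} [CommRing R] [CharP R 2] (x u : R) (k : ℕ) :
    (x + u) ^ (2 ^ k + 1) + x ^ (2 ^ k + 1) = u ^ (2 ^ k + 1) + x * u ^ 2 ^ k + x ^ 2 ^ k * u := by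
  have h2 : (2 : R) = 0 := CharP.cast_eq_zero R 2
  rw [pow_succ, add_pow_char_pow]
  linear_combination (x ^ 2 ^ k * x) * h2

theorem ipow_pow_two_pow {n : ℕ} (j : ℕ) (x : GaloisField 2 n) : ipow j x ^ 2 ^ j = x :=
  Function.invFun_eq ((iterateFrobeniusEquiv (GaloisField 2 n) 2 j).surjective x)

theorem trace_monomial_polarization {n : ℕ} (a x u : GaloisField 2 n) (k : ℕ) :
    Algebra.trace (ZMod 2) (GaloisField 2 n) (a * x ^ (2 ^ k + 1) + a * (x + u) ^ (2 ^ k + 1)) =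
      Algebra.trace (ZMod 2) (GaloisField 2 n)
        (a * u ^ (2 ^ k + 1) + x * (a * u ^ 2 ^ k + ipow k a * ipow k u)) := by
  have hfrob : (x * (ipow k a * ipow k u)) ^ 2 ^ k = a * x ^ 2 ^ k * u := by
    rw [mul_pow, mul_pow, ipow_pow_two_pow, ipow_pow_two_pow]; ring
  have htr := FiniteField.trace_pow_card_pow (ZMod 2) (x * (ipow k a * ipow k u)) k
  rw [ZMod.card, hfrob] at htr
  rw [← mul_add, add_comm (x ^ _), add_pow_two_pow_add_one, mul_add x, ← add_assoc,
    map_add _ _ (x * _), ← htr, ← map_add]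
  ring_nf

section QuadraticForm

variable {n m : ℕ} (a : Fin m → GaloisField 2 n) (k : Fin m → ℕ)

noncomputable def quadForm (x : GaloisField 2 n) : GaloisField 2 n :=
  ∑ i, a i * x ^ (2 ^ k i + 1)

noncomputable def polarMap (u : GaloisField 2 n) : GaloisField 2 n :=
  ∑ i, (a i * u ^ 2 ^ k i + ipow (k i) (a i) * ipow (k i) u)

theorem trace_quadForm_polarization (x u : GaloisField 2 n) :
    Algebra.trace (ZMod 2) (GaloisField 2 n) (quadForm a k x + quadForm a k (x + u)) =
      Algebra.trace (ZMod 2) (GaloisField 2 n) (quadForm a k u + x * polarMap a k u) := by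
  simp only [quadForm, polarMap, mul_sum, ← sum_add_distrib, map_sum, trace_monomial_polarization]

end QuadraticForm

open scoped Classical in
theorem stmt_7_general (n m : ℕ) (hn : 0 < n) (a : Fin m → GaloisField 2 n) (kk : Fin m → ℕ) :
    (∑ x : GaloisField 2 n,
        if Algebra.trace (ZMod 2) (GaloisField 2 n)
            (∑ i, a i * x ^ (2 ^ kk i + 1)) = 0 then (1 : ℤ) else -1) ^ 2 =
      2 ^ n *
        ∑ u ∈ Finset.univ.filter (fun u : GaloisField 2 n =>
            (∑ i, (a i * u ^ 2 ^ kk i + ipow (kk i) (a i) * ipow (kk i) u)) = 0),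
          if Algebra.trace (ZMod 2) (GaloisField 2 n)
              (∑ i, a i * u ^ (2 ^ kk i + 1)) = 0 then (1 : ℤ) else -1 := by
  have key := sq_sum_addChar_eq_card_mul_sum_ker isPrimitive_traceSign (quadForm a kk)
    (polarMap a kk) fun x u => by rw [traceSign_apply, traceSign_apply, trace_quadForm_polarization]
  rw [Fintype.card_eq_nat_card, GaloisField.card 2 n hn.ne'] at key
  simp only [traceSign_apply, Nat.cast_pow, Nat.cast_ofNat] at key
  exact key

open scoped Classical in
/-- With `Q(x) = ∑ aᵢ x^{2^{kᵢ}+1}` and `L(u) = ∑ (aᵢ u^{2^{kᵢ}} + aᵢ^{2^{-kᵢ}} u^{2^{-kᵢ}})`,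
the square of `∑_x (-1)^{Tr(Q(x))}` equals `2^n ∑_{u ∈ K} (-1)^{Tr(Q(u))}` where `K = ker L`. -/
theorem stmt_7 (n m : ℕ) (hn : 0 < n) (a : Fin m → GaloisField 2 n) (kk : Fin m → ℕ)
    (hkk : ∀ i, 0 < kk i) :
    (∑ x : GaloisField 2 n,
        if Algebra.trace (ZMod 2) (GaloisField 2 n)
            (∑ i, a i * x ^ (2 ^ kk i + 1)) = 0 then (1 : ℤ) else -1) ^ 2 =
      2 ^ n *
        ∑ u ∈ Finset.univ.filter (fun u : GaloisField 2 n =>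
            (∑ i, (a i * u ^ 2 ^ kk i + ipow (kk i) (a i) * ipow (kk i) u)) = 0),
          if Algebra.trace (ZMod 2) (GaloisField 2 n)
              (∑ i, a i * u ^ (2 ^ kk i + 1)) = 0 then (1 : ℤ) else -1 :=
  stmt_7_general n m hn a kk
end

section
/- Let n be odd, let k be a positive integer with gcd(k, n) = 1, and let a, b, c be elements of L = GF(2^n). Then \sum_{x \in L} (-1)^{Tr(a x + b x^{2^{2k}-2^k+1} + c x^{2^{4k}-2^{3k}+2^{2k}-2^k+1})} = \sum_{x \in L} (-1)^{Tr(a x^{2^k+1} + b x^{2^{3k}+1} + c x^{2^{5k}+1})}. -/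
/-!
Since `n` is odd and `gcd(k, n) = 1`, `gcd(2^n - 1, 2^k + 1)` divides
`gcd(2^n - 1, 2^{2k} - 1) = 2^{gcd(n, 2k)} - 1 = 1`, so `x ↦ x^{2^k+1}` permutes `GF(2^n)`.
Substituting it for `x` in the first sum gives the second, because with `q = 2^k`
the exponents factor as `(q + 1)(q^2 - q + 1) = q^3 + 1` and
`(q + 1)(q^4 - q^3 + q^2 - q + 1) = q^5 + 1`.
-/

theorem Nat.add_one_mul_sq_sub_add_one (q : ℕ) : (q + 1) * (q ^ 2 - q + 1) = q ^ 3 + 1 := by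
  have h : q ≤ q ^ 2 := Nat.le_self_pow two_ne_zero q
  zify [h]
  ring

theorem Nat.add_one_mul_pow_four_sub_add_one (q : ℕ) :
    (q + 1) * (q ^ 4 - q ^ 3 + q ^ 2 - q + 1) = q ^ 5 + 1 := by
  have h₁ : q ^ 3 ≤ q ^ 4 := by
    rcases q.eq_zero_or_pos with rfl | hq
    · simp
    · exact Nat.pow_le_pow_right hq (by norm_num)
  have h₂ : q ≤ q ^ 4 - q ^ 3 + q ^ 2 := (Nat.le_self_pow two_ne_zero q).trans (by omega)
  zify [h₁, h₂]
  ring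

theorem Nat.coprime_two_pow_sub_one_two_pow_add_one {n k : ℕ} (hn : Odd n) (hkn : k.Coprime n) :
    (2 ^ n - 1).Coprime (2 ^ k + 1) := by
  have hdvd : 2 ^ k + 1 ∣ 2 ^ (2 * k) - 1 := by
    rw [pow_mul', ← one_pow 2, Nat.sq_sub_sq, one_pow]
    exact Dvd.intro _ rfl
  have hgcd : Nat.gcd n (2 * k) = 1 :=
    (Nat.Coprime.mul_left (Nat.coprime_two_left.mpr hn) hkn).symm
  refine Nat.Coprime.coprime_dvd_right hdvd ?_
  rw [Nat.Coprime, Nat.pow_sub_one_gcd_pow_sub_one, hgcd]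
  rfl

theorem pow_bijective_of_coprime_card_sub_one {K : Type*} [GroupWithZero K] [Finite K] {m : ℕ}
    (hm : m ≠ 0) (h : (Nat.card K - 1).Coprime m) : Function.Bijective (· ^ m : K → K) := by
  refine Finite.injective_iff_bijective.mp fun x y hxy => ?_
  rcases eq_or_ne x 0 with rfl | hx
  · exact ((pow_eq_zero_iff hm).mp (hxy.symm.trans (zero_pow hm))).symm
  rcases eq_or_ne y 0 with rfl | hy
  · exact (pow_eq_zero_iff hm).mp (hxy.trans (zero_pow hm))
  rw [← Nat.card_units] at h
  have := h.pow_left_bijective.injective (a₁ := Units.mk0 x hx) (a₂ := Units.mk0 y hy)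
    (Units.ext hxy)
  exact congrArg Units.val this

theorem stmt_11_general (n k : ℕ) (hn : Odd n) (hkn : Nat.gcd k n = 1)
    (a b c : GaloisField 2 n) :
    (∑ x : GaloisField 2 n,
        if Algebra.trace (ZMod 2) (GaloisField 2 n)
            (a * x + b * x ^ (2 ^ (2 * k) - 2 ^ k + 1) +
              c * x ^ (2 ^ (4 * k) - 2 ^ (3 * k) + 2 ^ (2 * k) - 2 ^ k + 1)) = 0
        then (1 : ℤ) else -1) =
      ∑ x : GaloisField 2 n,
        if Algebra.trace (ZMod 2) (GaloisField 2 n)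
            (a * x ^ (2 ^ k + 1) + b * x ^ (2 ^ (3 * k) + 1) + c * x ^ (2 ^ (5 * k) + 1)) = 0
        then (1 : ℤ) else -1 := by
  have hcard : Nat.card (GaloisField 2 n) = 2 ^ n :=
    GaloisField.card 2 n (by rintro rfl; simp at hn)
  have hbij : Function.Bijective (· ^ (2 ^ k + 1) : GaloisField 2 n → GaloisField 2 n) :=
    pow_bijective_of_coprime_card_sub_one (by positivity)
      (hcard ▸ Nat.coprime_two_pow_sub_one_two_pow_add_one hn hkn)
  refine (Fintype.sum_bijective _ hbij _ _ fun x => ?_).symm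
  simp only [← pow_mul]
  rw [pow_mul' 2 2 k, pow_mul' 2 3 k, pow_mul' 2 4 k, pow_mul' 2 5 k,
    Nat.add_one_mul_sq_sub_add_one, Nat.add_one_mul_pow_four_sub_add_one]

/-- Substituting the permutation `x ↦ x^{2^k+1}` transforms the exponential sum of
`ax + bx^{2^{2k}-2^k+1} + cx^{2^{4k}-2^{3k}+2^{2k}-2^k+1}` into that of
`ax^{2^k+1} + bx^{2^{3k}+1} + cx^{2^{5k}+1}`. -/
theorem stmt_11 (n k : ℕ) (hn : Odd n) (hk : 0 < k) (hkn : Nat.gcd k n = 1)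
    (a b c : GaloisField 2 n) :
    (∑ x : GaloisField 2 n,
        if Algebra.trace (ZMod 2) (GaloisField 2 n)
            (a * x + b * x ^ (2 ^ (2 * k) - 2 ^ k + 1) +
              c * x ^ (2 ^ (4 * k) - 2 ^ (3 * k) + 2 ^ (2 * k) - 2 ^ k + 1)) = 0
        then (1 : ℤ) else -1) =
      ∑ x : GaloisField 2 n,
        if Algebra.trace (ZMod 2) (GaloisField 2 n)
            (a * x ^ (2 ^ k + 1) + b * x ^ (2 ^ (3 * k) + 1) + c * x ^ (2 ^ (5 * k) + 1)) = 0
        then (1 : ℤ) else -1 :=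
  stmt_11_general n k hn hkn a b c
end

section
/- Let n be a positive integer, k a positive integer with gcd(k, n) = 1, and a, b, c elements of L = GF(2^n). Define G(u) = a u^{2^k+1} + b u^{2^{3k}+1} + b^{2^{-k}} u^{2^{2k}+2^{-k}} + b^{2^{-2k}} u^{2^k+2^{-2k}} + c u^{2^{5k}+1} + c^{2^{-k}} u^{2^{4k}+2^{-k}} + c^{2^{-2k}} u^{2^{3k}+2^{-2k}} + c^{2^{-3k}} u^{2^{2k}+2^{-3k}} + c^{2^{-4k}} u^{2^k+2^{-4k}} and L(u) = a u^{2^k} + a^{2^{-k}} u^{2^{-k}} + b u^{2^{3k}} + b^{2^{-3k}} u^{2^{-3k}} + c u^{2^{5k}} + c^{2^{-5k}} u^{2^{-5k}}. Then for every u in L, L(u) = 0 if and only if G(u) = 0 or G(u) = 1. -/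
section Polynomials

variable {R : Type*} [CommRing R]

/- `L` and `G` of the statement, with `τ` standing for `x ↦ x ^ 2 ^ k` and `ψ` for its inverse,
so that `τ^[j] u = u ^ 2 ^ (j * k)` and `ψ^[j] u = u ^ 2 ^ (-j * k)`. -/

def linearizedL (τ ψ : R → R) (a b c u : R) : R :=
  a * τ u + ψ a * ψ u + b * τ^[3] u + ψ^[3] b * ψ^[3] u + c * τ^[5] u + ψ^[5] c * ψ^[5] u

def quadraticG (τ ψ : R → R) (a b c u : R) : R :=
  a * (τ u * u) + b * (τ^[3] u * u) + ψ b * (τ^[2] u * ψ u) + ψ^[2] b * (τ u * ψ^[2] u) +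
    c * (τ^[5] u * u) + ψ c * (τ^[4] u * ψ u) + ψ^[2] c * (τ^[3] u * ψ^[2] u) +
    ψ^[3] c * (τ^[2] u * ψ^[3] u) + ψ^[4] c * (τ u * ψ^[4] u)

theorem mul_linearizedL_eq_quadraticG_add [CharP R 2] (τ ψ : R →+* R) (hψτ : ∀ x, ψ (τ x) = x)
    (a b c u : R) :
    u * linearizedL τ ψ a b c u = quadraticG τ ψ a b c u + ψ (quadraticG τ ψ a b c u) := by
  simp only [linearizedL, quadraticG, map_add, map_mul, Function.iterate_succ_apply',
    Function.iterate_zero_apply, hψτ]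
  grind

end Polynomials

section Frobenius

variable {R : Type*} [CommSemiring R] (p : ℕ) [ExpChar R p]

theorem iterate_iterateFrobenius_apply (k m : ℕ) (x : R) :
    (iterateFrobenius R p k)^[m] x = x ^ p ^ (m * k) := by
  rw [show ⇑(iterateFrobenius R p k) = (· ^ p ^ k) from rfl, pow_iterate, ← pow_mul, mul_comm]

theorem iterate_iterateFrobeniusEquiv_symm_apply [PerfectRing R p] (k m : ℕ) (x : R) :
    (iterateFrobeniusEquiv R p k).symm^[m] x = (iterateFrobeniusEquiv R p (m * k)).symm x := by
  induction m with
  | zero => simp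
  | succ m ih =>
    rw [Function.iterate_succ_apply', ih, add_mul, one_mul, add_comm,
      iterateFrobeniusEquiv_symm_add_apply]

end Frobenius

section FiniteField

variable {K : Type*} [Field K] [Finite K]

theorem FiniteField.pow_char_eq_self_of_pow_char_pow_eq_self {p : ℕ} [Fact p.Prime] [CharP K p]
    {n k : ℕ} (hcard : Nat.card K = p ^ n) (hkn : k.Coprime n) {x : K} (hx : x ^ p ^ k = x) :
    x ^ p = x := by
  have := Fintype.ofFinite K
  have hk : Function.IsPeriodicPt (frobenius K p) k x := by
    rwa [Function.IsPeriodicPt, Function.IsFixedPt, iterate_frobenius]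
  have hn : Function.IsPeriodicPt (frobenius K p) n x := by
    rw [Function.IsPeriodicPt, Function.IsFixedPt, iterate_frobenius, ← hcard,
      Nat.card_eq_fintype_card]
    exact FiniteField.pow_card x
  simpa [hkn.gcd_eq_one, Function.IsPeriodicPt, Function.IsFixedPt, frobenius_def]
    using hk.gcd hn

variable [CharP K 2] {n k : ℕ}

theorem CharTwo.pow_two_pow_eq_self_iff (hcard : Nat.card K = 2 ^ n) (hkn : k.Coprime n)
    {x : K} : x ^ 2 ^ k = x ↔ x = 0 ∨ x = 1 := by
  constructor
  · intro hx
    rw [← IsIdempotentElem.iff_eq_zero_or_one, IsIdempotentElem, ← sq]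
    exact FiniteField.pow_char_eq_self_of_pow_char_pow_eq_self hcard hkn hx
  · rintro (rfl | rfl) <;> simp

theorem linearizedL_iterateFrobenius_eq_zero_iff (hcard : Nat.card K = 2 ^ n)
    (hkn : k.Coprime n) (a b c u : K) :
    linearizedL (iterateFrobenius K 2 k) (iterateFrobeniusEquiv K 2 k).symm a b c u = 0 ↔
      quadraticG (iterateFrobenius K 2 k) (iterateFrobeniusEquiv K 2 k).symm a b c u = 0 ∨
      quadraticG (iterateFrobenius K 2 k) (iterateFrobeniusEquiv K 2 k).symm a b c u = 1 := by
  set ψ := (iterateFrobeniusEquiv K 2 k).symm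
  set G := quadraticG (iterateFrobenius K 2 k) ψ a b c u
  have key : u * linearizedL (iterateFrobenius K 2 k) ψ a b c u = G + ψ G :=
    mul_linearizedL_eq_quadraticG_add _ (ψ : K →+* K)
      (iterateFrobeniusEquiv K 2 k).symm_apply_apply a b c u
  have hfix : ψ G = G ↔ G = 0 ∨ G = 1 := by
    rw [← CharTwo.pow_two_pow_eq_self_iff hcard hkn, RingEquiv.symm_apply_eq, eq_comm]
    rfl
  rw [← hfix]
  constructor
  · intro hL
    rw [hL, mul_zero, eq_comm, CharTwo.add_eq_zero] at key
    exact key.symm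
  · intro hG
    rw [hG, CharTwo.add_self_eq_zero, mul_eq_zero] at key
    rcases key with rfl | hL
    · simp [linearizedL]
    · exact hL

end FiniteField

theorem ipow_eq_iterateFrobeniusEquiv_symm {n : ℕ} (j : ℕ) (x : GaloisField 2 n) :
    ipow j x = (iterateFrobeniusEquiv (GaloisField 2 n) 2 j).symm x :=
  (iterateFrobeniusEquiv (GaloisField 2 n) 2 j).injective <| by
    rw [RingEquiv.apply_symm_apply]
    exact Function.invFun_eq ((iterateFrobeniusEquiv (GaloisField 2 n) 2 j).surjective x)

theorem stmt_13_general (n k : ℕ) (hn : 0 < n) (hkn : Nat.gcd k n = 1)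
    (a b c : GaloisField 2 n) (u : GaloisField 2 n) :
    (a * u ^ 2 ^ k + ipow k a * ipow k u + b * u ^ 2 ^ (3 * k) +
        ipow (3 * k) b * ipow (3 * k) u + c * u ^ 2 ^ (5 * k) +
        ipow (5 * k) c * ipow (5 * k) u) = 0 ↔
      (a * u ^ (2 ^ k + 1) + b * u ^ (2 ^ (3 * k) + 1) +
        ipow k b * (u ^ 2 ^ (2 * k) * ipow k u) +
        ipow (2 * k) b * (u ^ 2 ^ k * ipow (2 * k) u) +
        c * u ^ (2 ^ (5 * k) + 1) +
        ipow k c * (u ^ 2 ^ (4 * k) * ipow k u) +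
        ipow (2 * k) c * (u ^ 2 ^ (3 * k) * ipow (2 * k) u) +
        ipow (3 * k) c * (u ^ 2 ^ (2 * k) * ipow (3 * k) u) +
        ipow (4 * k) c * (u ^ 2 ^ k * ipow (4 * k) u)) = 0 ∨
        (a * u ^ (2 ^ k + 1) + b * u ^ (2 ^ (3 * k) + 1) +
        ipow k b * (u ^ 2 ^ (2 * k) * ipow k u) +
        ipow (2 * k) b * (u ^ 2 ^ k * ipow (2 * k) u) +
        c * u ^ (2 ^ (5 * k) + 1) +
        ipow k c * (u ^ 2 ^ (4 * k) * ipow k u) +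
        ipow (2 * k) c * (u ^ 2 ^ (3 * k) * ipow (2 * k) u) +
        ipow (3 * k) c * (u ^ 2 ^ (2 * k) * ipow (3 * k) u) +
        ipow (4 * k) c * (u ^ 2 ^ k * ipow (4 * k) u)) = 1 := by
  have h := linearizedL_iterateFrobenius_eq_zero_iff (GaloisField.card 2 n hn.ne') hkn a b c u
  simp only [linearizedL, quadraticG, iterate_iterateFrobenius_apply,
    iterate_iterateFrobeniusEquiv_symm_apply, ← ipow_eq_iterateFrobeniusEquiv_symm,
    iterateFrobenius_def] at h
  simpa only [pow_succ] using h

/-- For `gcd(k,n) = 1`: `L(u) = 0` if and only if `G(u) = 0` or `G(u) = 1`. -/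
theorem stmt_13 (n k : ℕ) (hn : 0 < n) (hk : 0 < k) (hkn : Nat.gcd k n = 1)
    (a b c : GaloisField 2 n) (u : GaloisField 2 n) :
    (a * u ^ 2 ^ k + ipow k a * ipow k u + b * u ^ 2 ^ (3 * k) +
        ipow (3 * k) b * ipow (3 * k) u + c * u ^ 2 ^ (5 * k) +
        ipow (5 * k) c * ipow (5 * k) u) = 0 ↔
      (a * u ^ (2 ^ k + 1) + b * u ^ (2 ^ (3 * k) + 1) +
        ipow k b * (u ^ 2 ^ (2 * k) * ipow k u) +
        ipow (2 * k) b * (u ^ 2 ^ k * ipow (2 * k) u) +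
        c * u ^ (2 ^ (5 * k) + 1) +
        ipow k c * (u ^ 2 ^ (4 * k) * ipow k u) +
        ipow (2 * k) c * (u ^ 2 ^ (3 * k) * ipow (2 * k) u) +
        ipow (3 * k) c * (u ^ 2 ^ (2 * k) * ipow (3 * k) u) +
        ipow (4 * k) c * (u ^ 2 ^ k * ipow (4 * k) u)) = 0 ∨
        (a * u ^ (2 ^ k + 1) + b * u ^ (2 ^ (3 * k) + 1) +
        ipow k b * (u ^ 2 ^ (2 * k) * ipow k u) +
        ipow (2 * k) b * (u ^ 2 ^ k * ipow (2 * k) u) +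
        c * u ^ (2 ^ (5 * k) + 1) +
        ipow k c * (u ^ 2 ^ (4 * k) * ipow k u) +
        ipow (2 * k) c * (u ^ 2 ^ (3 * k) * ipow (2 * k) u) +
        ipow (3 * k) c * (u ^ 2 ^ (2 * k) * ipow (3 * k) u) +
        ipow (4 * k) c * (u ^ 2 ^ k * ipow (4 * k) u)) = 1 :=
  stmt_13_general n k hn hkn a b c u
end

section
/- Let L = GF(2^n) and let f : L -> L be an APN function with f(0) = 0. Then for every nonempty subset T of the nonzero elements of L with |T| <= 4, the two sums \sum_{x \in T} x and \sum_{x \in T} f(x) are not both zero. (Equivalently, any binary code whose parity checks include x and f(x) has minimum distance at least 5.) -/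
/-- If `f` is APN with `f(0) = 0`, then no nonempty set of at most 4 nonzero elements has
both power sums `∑ x` and `∑ f(x)` vanish: the corresponding code has minimum distance ≥ 5. -/
theorem stmt_17 (n : ℕ) (hn : 0 < n) (f : GaloisField 2 n → GaloisField 2 n)
    (hf0 : f 0 = 0)
    (hAPN : ∀ p q : GaloisField 2 n, q ≠ 0 →
      {x : GaloisField 2 n | f (x + q) + f x = p}.ncard ≤ 2)
    (T : Finset (GaloisField 2 n)) (hT : T.Nonempty) (hT0 : ∀ x ∈ T, x ≠ 0)
    (hcard : T.card ≤ 4) :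
    ¬((∑ x ∈ T, x) = 0 ∧ (∑ x ∈ T, f x) = 0) := by
  haveI : Fact (Nat.Prime 2) := ⟨by norm_num⟩
  classical
  -- char two facts
  have hC : ∀ u v : GaloisField 2 n, u + v = 0 → u = v := by
    intro u v h
    have := CharTwo.add_eq_iff_eq_add.mp h
    simpa using this
  have hself : ∀ u : GaloisField 2 n, u + u = 0 := CharTwo.add_self_eq_zero
  rintro ⟨hsum, hfsum⟩
  rcases Nat.lt_or_ge T.card 2 with h1 | h2
  · -- card = 1
    have : T.card = 1 := le_antisymm (Nat.lt_succ_iff.mp h1) hT.card_pos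
    obtain ⟨a, rfl⟩ := Finset.card_eq_one.mp this
    simp only [Finset.sum_singleton] at hsum
    exact hT0 a (Finset.mem_singleton_self a) hsum
  · obtain ⟨a, ha, b, hb, hab⟩ := Finset.one_lt_card.mp h2
    set T' := (T.erase a).erase b with hT'
    have hbe : b ∈ T.erase a := Finset.mem_erase.mpr ⟨fun h => hab h.symm, hb⟩
    have hsplit : ∀ g : GaloisField 2 n → GaloisField 2 n,
        ∑ x ∈ T, g x = g a + (g b + ∑ x ∈ T', g x) := by
      intro g
      rw [← Finset.insert_erase ha, Finset.sum_insert (Finset.notMem_erase a T),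
        ← Finset.insert_erase hbe, Finset.sum_insert (Finset.notMem_erase b _)]
    have hs1 : (∑ x ∈ T', x) = a + b := by
      have := (hsplit id).symm.trans hsum
      simp only [id] at this
      have h' : (a + b) + ∑ x ∈ T', x = 0 := by rw [add_assoc]; exact this
      exact (hC _ _ h').symm
    have hs2 : (∑ x ∈ T', f x) = f a + f b := by
      have := (hsplit f).symm.trans hfsum
      have h' : (f a + f b) + ∑ x ∈ T', f x = 0 := by rw [add_assoc]; exact this
      exact (hC _ _ h').symm
    set q := a + b with hqdef
    set p := f a + f b with hpdef
    have hq : q ≠ 0 := fun h => hab (hC a b h)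
    have haq : a + q = b := by rw [hqdef, ← add_assoc, hself, zero_add]
    have hbq : b + q = a := by rw [hqdef, add_comm a b, ← add_assoc, hself, zero_add]
    have hsola : f (a + q) + f a = p := by rw [haq, hpdef, add_comm]
    have hsolb : f (b + q) + f b = p := by rw [hbq]
    -- find a third solution x3 ∉ {a, b}
    have hcard' : T'.card ≤ 2 := by
      have e1 := Finset.card_erase_of_mem hbe
      have e2 := Finset.card_erase_of_mem ha
      have h3 : 1 ≤ T.card := hT.card_pos
      rw [hT', e1, e2]
      omega
    obtain ⟨x3, hx3sol, hx3a, hx3b⟩ :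
        ∃ x3 : GaloisField 2 n, f (x3 + q) + f x3 = p ∧ x3 ≠ a ∧ x3 ≠ b := by
      interval_cases hc : T'.card
      · -- card T' = 0 : |T| = 2, contradiction
        have hT'e : T' = ∅ := Finset.card_eq_zero.mp hc
        rw [hT'e, Finset.sum_empty] at hs1
        exact absurd (hC a b hs1.symm) hab
      · -- card T' = 1 : |T| = 3, take x3 = 0
        obtain ⟨c, hc⟩ := Finset.card_eq_one.mp hc
        rw [hc, Finset.sum_singleton] at hs1 hs2
        refine ⟨0, ?_, ?_, ?_⟩
        · rw [zero_add, hf0, add_zero, ← hs1]; exact hs2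
        · exact fun h => hT0 a ha h.symm
        · exact fun h => hT0 b hb h.symm
      · -- card T' = 2 : |T| = 4, take x3 = c
        obtain ⟨c, d, hcd, hT'cd⟩ := Finset.card_eq_two.mp hc
        rw [hT'cd] at hs1 hs2
        rw [Finset.sum_pair hcd] at hs1
        rw [Finset.sum_pair hcd] at hs2
        have hcT' : c ∈ T' := by rw [hT'cd]; exact Finset.mem_insert_self c _
        have hcq : c + q = d := by
          rw [← hs1, ← add_assoc, hself, zero_add]
        refine ⟨c, ?_, ?_, ?_⟩
        · rw [hcq, add_comm (f d) (f c)]; exact hs2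
        · exact fun h => (Finset.mem_erase.mp (Finset.mem_erase.mp hcT').2).1 h
        · exact fun h => (Finset.mem_erase.mp hcT').1 h
    -- now 3 ≤ ncard of solution set, contradiction
    have hsub : ↑({a, b, x3} : Finset (GaloisField 2 n)) ⊆ {x : GaloisField 2 n | f (x + q) + f x = p} := by
      intro x hx
      simp only [Finset.coe_insert, Finset.coe_singleton, Set.mem_insert_iff,
        Set.mem_singleton_iff] at hx
      rcases hx with rfl | rfl | rfl
      · exact hsola
      · exact hsolb
      · exact hx3sol
    have h3 : ({a, b, x3} : Finset (GaloisField 2 n)).card = 3 := by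
      rw [Finset.card_insert_of_notMem, Finset.card_insert_of_notMem, Finset.card_singleton]
      · simpa using hx3b.symm
      · simp only [Finset.mem_insert, Finset.mem_singleton]
        push_neg
        exact ⟨hab, hx3a.symm⟩
    have hle := Set.ncard_le_ncard hsub (Set.toFinite _)
    rw [Set.ncard_coe_finset, h3] at hle
    have := hAPN p q hq
    omega
end
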